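/- arXiv:1902.07616 — 2 statements merged into one kernel-verified Lean document; each statement's English description precedes it below -/
import Mathlib

section
/- Along any section g_{μν}(x), the pulled-back first Ostrogradski momentum P^{μνα} = (∂L/∂z_{μνα})∘j²g − ∂_β(P^{μναβ}) transforms under an orientation-preserving coordinate change x = x(x') as P^{μνα} = P^{μ'ν'α'} x^μ_{,μ'} x^ν_{,ν'} x^α_{,α'} det(x^{λ'}_{,λ}) + (x^α_{,β'} x^μ_{,μ'α'} x^ν_{,ν'} + x^α_{,β'} x^μ_{,μ'} x^ν_{,ν'α'}) P^{μ'ν'α'β'} det(x^{λ'}_{,λ}). -/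
/-- Partial derivative of a scalar function on ℝ⁴ in the `i`-th coordinate direction. -/
noncomputable def pd (i : Fin 4) (f : (Fin 4 → ℝ) → ℝ) (x : Fin 4 → ℝ) : ℝ :=
  fderiv ℝ f x (Pi.single i 1)

/-- The space of second-order jet fiber coordinates `(x, y_{μν}, z_{μνα}, z_{μναβ})`. -/
abbrev Jet2 : Type :=
  (Fin 4 → ℝ) × ((Fin 4 × Fin 4) → ℝ) × ((Fin 4 × Fin 4 × Fin 4) → ℝ)
    × ((Fin 4 × Fin 4 × Fin 4 × Fin 4) → ℝ)

/-- First partial `x^μ_{,μ'}` of the coordinate change `x = φ(x')`. -/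
noncomputable def Kc (φ : (Fin 4 → ℝ) → (Fin 4 → ℝ)) (x' : Fin 4 → ℝ) (μ μ' : Fin 4) : ℝ :=
  pd μ' (fun t => φ t μ) x'

/-- Second partial `x^μ_{,μ'α'}` of the coordinate change. -/
noncomputable def Hc (φ : (Fin 4 → ℝ) → (Fin 4 → ℝ)) (x' : Fin 4 → ℝ) (μ μ' α' : Fin 4) : ℝ :=
  pd α' (fun t => Kc φ t μ μ') x'

/-- Third partial `x^μ_{,μ'α'γ'}` of the coordinate change. -/
noncomputable def Tc (φ : (Fin 4 → ℝ) → (Fin 4 → ℝ)) (x' : Fin 4 → ℝ) (μ μ' α' γ' : Fin 4) : ℝ :=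
  pd γ' (fun t => Hc φ t μ μ' α') x'

/-- The Jacobian determinant `det(x^{λ'}_{,λ})` of the inverse change `x' = ψ(x)`,
expressed as a function of `x'`. -/
noncomputable def detJc (φ ψ : (Fin 4 → ℝ) → (Fin 4 → ℝ)) (x' : Fin 4 → ℝ) : ℝ :=
  (Matrix.of fun μ' μ => pd μ (fun t => ψ t μ') (φ x')).det

/-- Transformed metric coordinate `y_{μ'ν'} = y_{μν} x^μ_{,μ'} x^ν_{,ν'}`. -/
noncomputable def transY (K : Fin 4 → Fin 4 → ℝ) (y : (Fin 4 × Fin 4) → ℝ) :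
    (Fin 4 × Fin 4) → ℝ :=
  fun p => ∑ μ, ∑ ν, y (μ, ν) * K μ p.1 * K ν p.2

/-- Transformed first-jet coordinate (prolongation formula). -/
noncomputable def transZ1 (K : Fin 4 → Fin 4 → ℝ) (H : Fin 4 → Fin 4 → Fin 4 → ℝ)
    (y : (Fin 4 × Fin 4) → ℝ) (z1 : (Fin 4 × Fin 4 × Fin 4) → ℝ) :
    (Fin 4 × Fin 4 × Fin 4) → ℝ :=
  fun p => (∑ μ, ∑ ν, ∑ α, z1 (μ, ν, α) * K μ p.1 * K ν p.2.1 * K α p.2.2)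
    + (∑ μ, ∑ ν, y (μ, ν) * H μ p.1 p.2.2 * K ν p.2.1)
    + (∑ μ, ∑ ν, y (μ, ν) * K μ p.1 * H ν p.2.1 p.2.2)

/-- Transformed second-jet coordinate (prolongation formula). -/
noncomputable def transZ2 (K : Fin 4 → Fin 4 → ℝ) (H : Fin 4 → Fin 4 → Fin 4 → ℝ)
    (T : Fin 4 → Fin 4 → Fin 4 → Fin 4 → ℝ)
    (y : (Fin 4 × Fin 4) → ℝ) (z1 : (Fin 4 × Fin 4 × Fin 4) → ℝ)
    (z2 : (Fin 4 × Fin 4 × Fin 4 × Fin 4) → ℝ) :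
    (Fin 4 × Fin 4 × Fin 4 × Fin 4) → ℝ :=
  fun p =>
    (∑ μ, ∑ ν, ∑ α, ∑ γ, z2 (μ, ν, α, γ) * K μ p.1 * K ν p.2.1 * K α p.2.2.1 * K γ p.2.2.2)
    + (∑ μ, ∑ ν, ∑ α, z1 (μ, ν, α) *
        (H μ p.1 p.2.2.2 * K ν p.2.1 * K α p.2.2.1
          + K μ p.1 * H ν p.2.1 p.2.2.2 * K α p.2.2.1
          + K μ p.1 * K ν p.2.1 * H α p.2.2.1 p.2.2.2))
    + (∑ μ, ∑ ν, ∑ γ, z1 (μ, ν, γ) * K γ p.2.2.2 *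
        (H μ p.1 p.2.2.1 * K ν p.2.1 + K μ p.1 * H ν p.2.1 p.2.2.1))
    + (∑ μ, ∑ ν, y (μ, ν) *
        (T μ p.1 p.2.2.1 p.2.2.2 * K ν p.2.1 + H μ p.1 p.2.2.1 * H ν p.2.1 p.2.2.2
          + H μ p.1 p.2.2.2 * H ν p.2.1 p.2.2.1 + K μ p.1 * T ν p.2.1 p.2.2.1 p.2.2.2))

/-- The second jet extension `j²g` of a section `g` in the given coordinates. -/
noncomputable def jet2 (g : (Fin 4 → ℝ) → (Fin 4 × Fin 4) → ℝ) (x : Fin 4 → ℝ) : Jet2 :=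
  (x, g x, fun p => pd p.2.2 (fun t => g t (p.1, p.2.1)) x,
    fun q => pd q.2.2.2 (fun t => pd q.2.2.1 (fun s => g s (q.1, q.2.1)) t) x)

/-- The pulled-back second Ostrogradski momentum `P^{μναβ} = (∂L/∂z_{μναβ}) ∘ j²g`. -/
noncomputable def mom4 (L : Jet2 → ℝ) (g : (Fin 4 → ℝ) → (Fin 4 × Fin 4) → ℝ)
    (x : Fin 4 → ℝ) (q : Fin 4 × Fin 4 × Fin 4 × Fin 4) : ℝ :=
  fderiv ℝ L (jet2 g x) (0, 0, 0, Pi.single q 1)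

/-- The pulled-back first Ostrogradski momentum
`P^{μνα} = (∂L/∂z_{μνα}) ∘ j²g − ∂_β P^{μναβ}`. -/
noncomputable def mom3 (L : Jet2 → ℝ) (g : (Fin 4 → ℝ) → (Fin 4 × Fin 4) → ℝ)
    (x : Fin 4 → ℝ) (μ ν α : Fin 4) : ℝ :=
  fderiv ℝ L (jet2 g x) (0, 0, Pi.single (μ, ν, α) 1, 0)
    - ∑ β, pd β (fun t => mom4 L g t (μ, ν, α, β)) x

/- basic pd calculus -/
theorem pd_congr {f g : (Fin 4 → ℝ) → ℝ} (h : ∀ t, f t = g t) (i : Fin 4) (x : Fin 4 → ℝ) :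
    pd i f x = pd i g x := by
  have : f = g := funext h
  rw [this]

theorem pd_const (c : ℝ) (i : Fin 4) (x : Fin 4 → ℝ) : pd i (fun _ => c) x = 0 := by
  simp [pd]

theorem pd_add {f g : (Fin 4 → ℝ) → ℝ} {x} (hf : DifferentiableAt ℝ f x)
    (hg : DifferentiableAt ℝ g x) (i : Fin 4) :
    pd i (fun t => f t + g t) x = pd i f x + pd i g x := by
  simp [pd, fderiv_fun_add hf hg]

theorem pd_mul {f g : (Fin 4 → ℝ) → ℝ} {x} (hf : DifferentiableAt ℝ f x)
    (hg : DifferentiableAt ℝ g x) (i : Fin 4) :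
    pd i (fun t => f t * g t) x = pd i f x * g x + f x * pd i g x := by
  simp [pd, fderiv_fun_mul hf hg]; ring

theorem pd_mul3 {f1 f2 f3 : (Fin 4 → ℝ) → ℝ} {x} (h1 : DifferentiableAt ℝ f1 x)
    (h2 : DifferentiableAt ℝ f2 x) (h3 : DifferentiableAt ℝ f3 x) (i : Fin 4) :
    pd i (fun t => f1 t * f2 t * f3 t) x
      = pd i f1 x * f2 x * f3 x + f1 x * pd i f2 x * f3 x + f1 x * f2 x * pd i f3 x := by
  rw [pd_mul (h1.fun_mul h2) h3, pd_mul h1 h2]; ring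

theorem pd_mul5 {f1 f2 f3 f4 f5 : (Fin 4 → ℝ) → ℝ} {x} (h1 : DifferentiableAt ℝ f1 x)
    (h2 : DifferentiableAt ℝ f2 x) (h3 : DifferentiableAt ℝ f3 x)
    (h4 : DifferentiableAt ℝ f4 x) (h5 : DifferentiableAt ℝ f5 x) (i : Fin 4) :
    pd i (fun t => f1 t * f2 t * f3 t * f4 t * f5 t) x
      = pd i f1 x * f2 x * f3 x * f4 x * f5 x + f1 x * pd i f2 x * f3 x * f4 x * f5 x
        + f1 x * f2 x * pd i f3 x * f4 x * f5 x + f1 x * f2 x * f3 x * pd i f4 x * f5 x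
        + f1 x * f2 x * f3 x * f4 x * pd i f5 x := by
  rw [pd_mul (((h1.fun_mul h2).fun_mul h3).fun_mul h4) h5, pd_mul ((h1.fun_mul h2).fun_mul h3) h4,
    pd_mul (h1.fun_mul h2) h3, pd_mul h1 h2]
  ring

theorem pd_sum {ι : Type*} [DecidableEq ι] {s : Finset ι} {f : ι → (Fin 4 → ℝ) → ℝ} {x}
    (h : ∀ j ∈ s, DifferentiableAt ℝ (f j) x) (i : Fin 4) :
    pd i (fun t => ∑ j ∈ s, f j t) x = ∑ j ∈ s, pd i (f j) x := by
  simp [pd, fderiv_fun_sum h]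

theorem pd_coord (γ i : Fin 4) (x : Fin 4 → ℝ) :
    pd i (fun t => t γ) x = if γ = i then 1 else 0 := by
  have h : (fun t : Fin 4 → ℝ => t γ) = (ContinuousLinearMap.proj γ : (Fin 4 → ℝ) →L[ℝ] ℝ) := rfl
  rw [pd, h, ContinuousLinearMap.fderiv]
  simp [Pi.single_apply]

theorem clm_expand {ι : Type*} [Fintype ι] [DecidableEq ι]
    (T : (ι → ℝ) →L[ℝ] ℝ) (v : ι → ℝ) : T v = ∑ j, v j * T (Pi.single j 1) := by
  have hv : v = ∑ j, v j • (Pi.single j (1:ℝ) : ι → ℝ) := by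
    funext k; simp [Finset.sum_apply, Pi.single_apply]
  conv_lhs => rw [hv]
  simp [map_sum]

theorem pd_comp {f : (Fin 4 → ℝ) → ℝ} {φ : (Fin 4 → ℝ) → (Fin 4 → ℝ)} {x : Fin 4 → ℝ}
    (hf : DifferentiableAt ℝ f (φ x)) (hφ : DifferentiableAt ℝ φ x) (i : Fin 4) :
    pd i (fun t => f (φ t)) x = ∑ μ, pd μ f (φ x) * Kc φ x μ i := by
  have hcomp : fderiv ℝ (f ∘ φ) x = (fderiv ℝ f (φ x)).comp (fderiv ℝ φ x) :=
    fderiv_comp x hf hφ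
  have h1 : pd i (fun t => f (φ t)) x = fderiv ℝ f (φ x) (fderiv ℝ φ x (Pi.single i 1)) := by
    have := congrArg (fun (T : (Fin 4 → ℝ) →L[ℝ] ℝ) => T (Pi.single i 1)) hcomp
    simpa [pd, Function.comp_def] using this
  rw [h1, clm_expand (fderiv ℝ f (φ x)) _]
  refine Finset.sum_congr rfl fun μ _ => ?_
  have hKc : fderiv ℝ φ x (Pi.single i 1) μ = Kc φ x μ i := by
    have hφμ : (fun t => φ t μ) = (ContinuousLinearMap.proj μ : (Fin 4 → ℝ) →L[ℝ] ℝ) ∘ φ := rfl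
    have h2 : fderiv ℝ (fun t => φ t μ) x
        = (ContinuousLinearMap.proj μ : (Fin 4 → ℝ) →L[ℝ] ℝ).comp (fderiv ℝ φ x) := by
      rw [hφμ, fderiv_comp x (ContinuousLinearMap.differentiableAt _) hφ,
        ContinuousLinearMap.fderiv]
    simp [Kc, pd, h2]
  rw [hKc, pd]; ring

theorem contDiff_pd {f : (Fin 4 → ℝ) → ℝ} (hf : ContDiff ℝ (⊤ : ℕ∞) f) (i : Fin 4) :
    ContDiff ℝ (⊤ : ℕ∞) (pd i f) :=
  (hf.fderiv_right (by simp)).clm_apply contDiff_const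

theorem contDiff_K {φ : (Fin 4 → ℝ) → (Fin 4 → ℝ)} (hφ : ContDiff ℝ (⊤ : ℕ∞) φ) (μ μ' : Fin 4) :
    ContDiff ℝ (⊤ : ℕ∞) (fun x' => Kc φ x' μ μ') :=
  contDiff_pd (contDiff_pi.1 hφ μ) μ'

theorem contDiff_H {φ : (Fin 4 → ℝ) → (Fin 4 → ℝ)} (hφ : ContDiff ℝ (⊤ : ℕ∞) φ) (μ μ' α' : Fin 4) :
    ContDiff ℝ (⊤ : ℕ∞) (fun x' => Hc φ x' μ μ' α') :=
  contDiff_pd (contDiff_K hφ μ μ') α'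

theorem pd_symm {f : (Fin 4 → ℝ) → ℝ} (hf : ContDiff ℝ (⊤ : ℕ∞) f) (x : Fin 4 → ℝ) (i j : Fin 4) :
    pd i (fun t => pd j f t) x = pd j (fun t => pd i f t) x := by
  have hdf : DifferentiableAt ℝ (fderiv ℝ f) x :=
    ((hf.fderiv_right (m := (⊤ : ℕ∞)) (by simp)).differentiable (by simp)).differentiableAt
  have key : ∀ a b : Fin 4, pd a (fun t => pd b f t) x
      = fderiv ℝ (fderiv ℝ f) x (Pi.single a 1) (Pi.single b 1) := by
    intro a b
    have h1 : (fun t => pd b f t) = fun t => (fderiv ℝ f t) (Pi.single b 1) := rfl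
    rw [pd, h1, fderiv_clm_apply hdf (differentiableAt_const _)]
    simp
  rw [key, key, (hf.contDiffAt.isSymmSndFDerivAt (by rw [minSmoothness_of_isRCLikeNormedField]; exact WithTop.coe_le_coe.mpr le_top)).eq]

theorem Hc_symm {φ : (Fin 4 → ℝ) → (Fin 4 → ℝ)} (hφ : ContDiff ℝ (⊤ : ℕ∞) φ) (x' : Fin 4 → ℝ)
    (μ μ' α' : Fin 4) : Hc φ x' μ μ' α' = Hc φ x' μ α' μ' :=
  pd_symm (contDiff_pi.1 hφ μ) x' α' μ'
/- determinant and inverse-matrix machinery -/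
noncomputable def Mc (φ ψ : (Fin 4 → ℝ) → (Fin 4 → ℝ)) (x' : Fin 4 → ℝ) (γ' β : Fin 4) : ℝ :=
  pd β (fun t => ψ t γ') (φ x')

theorem contDiff_Mc {φ ψ : (Fin 4 → ℝ) → (Fin 4 → ℝ)} (hφ : ContDiff ℝ (⊤ : ℕ∞) φ)
    (hψ : ContDiff ℝ (⊤ : ℕ∞) ψ) (γ' β : Fin 4) : ContDiff ℝ (⊤ : ℕ∞) (fun t => Mc φ ψ t γ' β) :=
  (contDiff_pd (contDiff_pi.1 hψ γ') β).comp hφ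

theorem diffAt_prod {f : Fin 4 → (Fin 4 → ℝ) → ℝ} {x}
    (h : ∀ k, DifferentiableAt ℝ (f k) x) :
    DifferentiableAt ℝ (fun t => ∏ k, f k t) x :=
  (HasFDerivAt.finset_prod (u := Finset.univ) (fun k _ => (h k).hasFDerivAt)).differentiableAt

theorem detJc_eq {φ ψ : (Fin 4 → ℝ) → (Fin 4 → ℝ)} (x' : Fin 4 → ℝ) :
    detJc φ ψ x' = (Matrix.of fun γ' β => Mc φ ψ x' γ' β).det := rfl

theorem diffAt_detJc {φ ψ : (Fin 4 → ℝ) → (Fin 4 → ℝ)} (hφ : ContDiff ℝ (⊤ : ℕ∞) φ)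
    (hψ : ContDiff ℝ (⊤ : ℕ∞) ψ) (x' : Fin 4 → ℝ) : DifferentiableAt ℝ (detJc φ ψ) x' := by
  have h : detJc φ ψ = fun t => ∑ σ : Equiv.Perm (Fin 4),
      ((Equiv.Perm.sign σ : ℤ) : ℝ) * ∏ k, Mc φ ψ t (σ k) k := by
    funext t
    rw [detJc_eq, Matrix.det_apply']
    rfl
  rw [h]
  exact DifferentiableAt.fun_sum fun σ _ => (differentiableAt_const _).mul
    (diffAt_prod fun k =>
      ((contDiff_Mc hφ hψ (σ k) k).differentiable (by simp)).differentiableAt)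

theorem pd_prod {f : Fin 4 → (Fin 4 → ℝ) → ℝ} {x}
    (h : ∀ k, DifferentiableAt ℝ (f k) x) (i : Fin 4) :
    pd i (fun t => ∏ k, f k t) x
      = ∑ k, (∏ l ∈ Finset.univ.erase k, f l x) * pd i (f k) x := by
  have H := HasFDerivAt.finset_prod (u := Finset.univ)
    (fun k _ => (h k).hasFDerivAt)
  rw [pd, H.fderiv]
  simp [ContinuousLinearMap.sum_apply, pd]

theorem pd_det {A : (Fin 4 → ℝ) → Matrix (Fin 4) (Fin 4) ℝ} {x}
    (hA : ∀ r c, DifferentiableAt ℝ (fun t => A t r c) x) (i : Fin 4) :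
    pd i (fun t => (A t).det) x
      = ∑ j, ∑ r, (A x).adjugate j r * pd i (fun t => A t r j) x := by
  have hdet : ∀ t, (A t).det
      = ∑ σ : Equiv.Perm (Fin 4), ((Equiv.Perm.sign σ : ℤ) : ℝ) * ∏ k, A t (σ k) k :=
    fun t => Matrix.det_apply' (A t)
  have h1 : pd i (fun t => (A t).det) x
      = ∑ σ : Equiv.Perm (Fin 4), ((Equiv.Perm.sign σ : ℤ) : ℝ) *
          ∑ j, (∏ l ∈ Finset.univ.erase j, A x (σ l) l) * pd i (fun t => A t (σ j) j) x := by
    rw [pd_congr hdet]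
    rw [pd_sum (fun σ _ => by
      exact (differentiableAt_const _).mul (diffAt_prod (fun k => hA (σ k) k)))]
    refine Finset.sum_congr rfl fun σ _ => ?_
    rw [pd_mul (differentiableAt_const _) (diffAt_prod (fun k => hA (σ k) k)),
      pd_const, pd_prod (fun k => hA (σ k) k)]
    ring
  have h2 : ∀ j, ∑ r, (A x).adjugate j r * pd i (fun t => A t r j) x
      = ((A x).updateCol j (fun r => pd i (fun t => A t r j) x)).det := by
    intro j
    rw [← Matrix.cramer_apply, Matrix.cramer_eq_adjugate_mulVec]
    rfl
  rw [h1]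
  rw [show (∑ j, ∑ r, (A x).adjugate j r * pd i (fun t => A t r j) x)
      = ∑ j, ∑ σ : Equiv.Perm (Fin 4), ((Equiv.Perm.sign σ : ℤ) : ℝ) *
          ∏ k, (A x).updateCol j (fun r => pd i (fun t => A t r j) x) (σ k) k from
    Finset.sum_congr rfl fun j _ => by rw [h2 j, Matrix.det_apply']]
  rw [Finset.sum_comm]
  refine Finset.sum_congr rfl fun σ _ => ?_
  rw [Finset.mul_sum]
  refine Finset.sum_congr rfl fun j _ => ?_
  have hprod : ∏ k, (A x).updateCol j (fun r => pd i (fun t => A t r j) x) (σ k) k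
      = pd i (fun t => A t (σ j) j) x * ∏ l ∈ Finset.univ.erase j, A x (σ l) l := by
    rw [← Finset.mul_prod_erase Finset.univ _ (Finset.mem_univ j)]
    rw [Matrix.updateCol_apply, if_pos rfl]
    congr 1
    refine Finset.prod_congr rfl fun l hl => ?_
    rw [Matrix.updateCol_apply, if_neg (Finset.ne_of_mem_erase hl)]
  rw [hprod]; ring

section MatrixIdent
variable {φ ψ : (Fin 4 → ℝ) → (Fin 4 → ℝ)}
  (hφ : ContDiff ℝ (⊤ : ℕ∞) φ) (hψ : ContDiff ℝ (⊤ : ℕ∞) ψ)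
  (hψφ : ∀ x', ψ (φ x') = x') (hφψ : ∀ x, φ (ψ x) = x)

include hφ hψ hψφ in
theorem MK_id : ∀ (x' : Fin 4 → ℝ) (γ' α' : Fin 4),
    ∑ β, Mc φ ψ x' γ' β * Kc φ x' β α' = if γ' = α' then 1 else 0 := by
  intro x' γ' α'
  have h1 : pd α' (fun t => ψ (φ t) γ') x' = if γ' = α' then 1 else 0 := by
    rw [pd_congr (fun t => by rw [hψφ t]) α' x', pd_coord]
  have h2 : pd α' (fun t => ψ (φ t) γ') x'
      = ∑ β, pd β (fun t => ψ t γ') (φ x') * Kc φ x' β α' :=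
    pd_comp (((contDiff_pi.1 hψ γ').differentiable (by simp)).differentiableAt)
      ((hφ.differentiable (by simp)).differentiableAt) α'
  rw [← h1, h2]
  rfl

include hφ hψ hψφ hφψ in
theorem KM_id : ∀ (x' : Fin 4 → ℝ) (μ β : Fin 4),
    ∑ γ', Kc φ x' μ γ' * Mc φ ψ x' γ' β = if μ = β then 1 else 0 := by
  intro x' μ β
  have h1 : pd β (fun x => φ (ψ x) μ) (φ x') = if μ = β then 1 else 0 := by
    rw [pd_congr (fun t => by rw [hφψ t]) β (φ x'), pd_coord]
  have h2 : pd β (fun x => φ (ψ x) μ) (φ x')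
      = ∑ γ', pd γ' (fun t => φ t μ) (ψ (φ x')) * Kc ψ (φ x') γ' β :=
    pd_comp (by
      rw [hψφ x']
      exact ((contDiff_pi.1 hφ μ).differentiable (by simp)).differentiableAt)
      ((hψ.differentiable (by simp)).differentiableAt) β
  rw [← h1, h2]
  refine Finset.sum_congr rfl fun γ' _ => ?_
  rw [hψφ x']
  rfl
end MatrixIdent

section MatrixIdent2
variable {φ ψ : (Fin 4 → ℝ) → (Fin 4 → ℝ)}
  (hφ : ContDiff ℝ (⊤ : ℕ∞) φ) (hψ : ContDiff ℝ (⊤ : ℕ∞) ψ)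
  (hψφ : ∀ x', ψ (φ x') = x') (hφψ : ∀ x, φ (ψ x) = x)

include hφ hψ hψφ hφψ in
theorem dKM_id : ∀ (x' : Fin 4 → ℝ) (i μ β : Fin 4),
    ∑ γ', Kc φ x' μ γ' * pd i (fun t => Mc φ ψ t γ' β) x'
      = - ∑ γ', Hc φ x' μ γ' i * Mc φ ψ x' γ' β := by
  intro x' i μ β
  have dK : ∀ γ', DifferentiableAt ℝ (fun t => Kc φ t μ γ') x' :=
    fun γ' => ((contDiff_K hφ μ γ').differentiable (by simp)).differentiableAt
  have dM : ∀ γ', DifferentiableAt ℝ (fun t => Mc φ ψ t γ' β) x' :=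
    fun γ' => ((contDiff_Mc hφ hψ γ' β).differentiable (by simp)).differentiableAt
  have h0 : pd i (fun t => ∑ γ', Kc φ t μ γ' * Mc φ ψ t γ' β) x' = 0 := by
    rw [pd_congr (fun t => KM_id hφ hψ hψφ hφψ t μ β) i x', pd_const]
  rw [pd_sum (fun γ' _ => (dK γ').fun_mul (dM γ'))] at h0
  have h1 : ∀ γ' ∈ Finset.univ, pd i (fun t => Kc φ t μ γ' * Mc φ ψ t γ' β) x'
      = Hc φ x' μ γ' i * Mc φ ψ x' γ' β + Kc φ x' μ γ' * pd i (fun t => Mc φ ψ t γ' β) x' := by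
    intro γ' _
    rw [pd_mul (dK γ') (dM γ')]
    rfl
  rw [Finset.sum_congr rfl h1, Finset.sum_add_distrib] at h0
  linarith [h0]

include hφ hψ hψφ hφψ in
theorem jacobi : ∀ (x' : Fin 4 → ℝ) (i : Fin 4),
    pd i (detJc φ ψ) x'
      = detJc φ ψ x' * ∑ j, ∑ r, Kc φ x' j r * pd i (fun t => Mc φ ψ t r j) x' := by
  intro x' i
  have hA : ∀ r c, DifferentiableAt ℝ (fun t => Mc φ ψ t r c) x' :=
    fun r c => ((contDiff_Mc hφ hψ r c).differentiable (by simp)).differentiableAt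
  have h1 : pd i (detJc φ ψ) x'
      = ∑ j, ∑ r, (Matrix.of fun γ' β => Mc φ ψ x' γ' β).adjugate j r
          * pd i (fun t => Mc φ ψ t r j) x' := by
    rw [pd_congr (fun t => detJc_eq t) i x']
    exact pd_det (A := fun t => Matrix.of fun γ' β => Mc φ ψ t γ' β) hA i
  have hadj : ∀ j r, (Matrix.of fun γ' β => Mc φ ψ x' γ' β).adjugate j r
      = detJc φ ψ x' * Kc φ x' j r := by
    have hBA : (Matrix.of fun j γ' => Kc φ x' j γ') * (Matrix.of fun γ' β => Mc φ ψ x' γ' β)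
        = (1 : Matrix (Fin 4) (Fin 4) ℝ) := by
      ext a b
      simp only [Matrix.mul_apply, Matrix.of_apply, Matrix.one_apply]
      exact KM_id hφ hψ hψφ hφψ x' a b
    have key : (Matrix.of fun γ' β => Mc φ ψ x' γ' β).adjugate
        = detJc φ ψ x' • (Matrix.of fun j γ' => Kc φ x' j γ') := by
      calc (Matrix.of fun γ' β => Mc φ ψ x' γ' β).adjugate
          = ((Matrix.of fun j γ' => Kc φ x' j γ') * (Matrix.of fun γ' β => Mc φ ψ x' γ' β))
            * (Matrix.of fun γ' β => Mc φ ψ x' γ' β).adjugate := by rw [hBA, Matrix.one_mul]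
        _ = (Matrix.of fun j γ' => Kc φ x' j γ')
            * ((Matrix.of fun γ' β => Mc φ ψ x' γ' β)
              * (Matrix.of fun γ' β => Mc φ ψ x' γ' β).adjugate) := by rw [Matrix.mul_assoc]
        _ = (Matrix.of fun j γ' => Kc φ x' j γ')
            * ((Matrix.of fun γ' β => Mc φ ψ x' γ' β).det • (1 : Matrix (Fin 4) (Fin 4) ℝ)) := by
            rw [Matrix.mul_adjugate]
        _ = detJc φ ψ x' • (Matrix.of fun j γ' => Kc φ x' j γ') := by
            rw [Matrix.mul_smul, Matrix.mul_one, detJc_eq]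
    intro j r
    rw [key]
    simp
  rw [h1, Finset.mul_sum]
  refine Finset.sum_congr rfl fun j _ => ?_
  rw [Finset.mul_sum]
  refine Finset.sum_congr rfl fun r _ => ?_
  rw [hadj j r]; ring

include hφ hψ hψφ hφψ in
theorem pd_transport {f : (Fin 4 → ℝ) → ℝ} {x' : Fin 4 → ℝ}
    (hf : DifferentiableAt ℝ f (φ x')) (β : Fin 4) :
    pd β f (φ x') = ∑ γ', pd γ' (fun t => f (φ t)) x' * Mc φ ψ x' γ' β := by
  have hchain : ∀ γ', pd γ' (fun t => f (φ t)) x' = ∑ l, pd l f (φ x') * Kc φ x' l γ' :=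
    fun γ' => pd_comp hf ((hφ.differentiable (by simp)).differentiableAt) γ'
  calc pd β f (φ x') = ∑ l, pd l f (φ x') * (if l = β then 1 else 0) := by
        rw [Finset.sum_eq_single β] <;> simp_all
    _ = ∑ l, pd l f (φ x') * ∑ γ', Kc φ x' l γ' * Mc φ ψ x' γ' β := by
        refine Finset.sum_congr rfl fun l _ => ?_
        rw [KM_id hφ hψ hψφ hφψ x' l β]
    _ = ∑ l, ∑ γ', pd l f (φ x') * (Kc φ x' l γ' * Mc φ ψ x' γ' β) := by
        exact Finset.sum_congr rfl fun l _ => Finset.mul_sum _ _ _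
    _ = ∑ γ', ∑ l, pd l f (φ x') * (Kc φ x' l γ' * Mc φ ψ x' γ' β) := Finset.sum_comm
    _ = ∑ γ', pd γ' (fun t => f (φ t)) x' * Mc φ ψ x' γ' β := by
        refine Finset.sum_congr rfl fun γ' _ => ?_
        rw [hchain γ', Finset.sum_mul]
        exact Finset.sum_congr rfl fun l _ => by ring
end MatrixIdent2

/- jets of a section -/
noncomputable def Z1c (g : (Fin 4 → ℝ) → (Fin 4 × Fin 4) → ℝ) (x : Fin 4 → ℝ) :
    (Fin 4 × Fin 4 × Fin 4) → ℝ :=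
  fun p => pd p.2.2 (fun t => g t (p.1, p.2.1)) x

noncomputable def Z2c (g : (Fin 4 → ℝ) → (Fin 4 × Fin 4) → ℝ) (x : Fin 4 → ℝ) :
    (Fin 4 × Fin 4 × Fin 4 × Fin 4) → ℝ :=
  fun q => pd q.2.2.2 (fun t => Z1c g t (q.1, q.2.1, q.2.2.1)) x

theorem jet2_eq (g : (Fin 4 → ℝ) → (Fin 4 × Fin 4) → ℝ) (x : Fin 4 → ℝ) :
    jet2 g x = (x, g x, Z1c g x, Z2c g x) := rfl

theorem contDiff_Z1c {g : (Fin 4 → ℝ) → (Fin 4 × Fin 4) → ℝ}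
    (hg : ∀ p, ContDiff ℝ (⊤ : ℕ∞) fun x => g x p) (p : Fin 4 × Fin 4 × Fin 4) :
    ContDiff ℝ (⊤ : ℕ∞) (fun x => Z1c g x p) :=
  contDiff_pd (hg (p.1, p.2.1)) p.2.2

theorem contDiff_Z2c {g : (Fin 4 → ℝ) → (Fin 4 × Fin 4) → ℝ}
    (hg : ∀ p, ContDiff ℝ (⊤ : ℕ∞) fun x => g x p) (q : Fin 4 × Fin 4 × Fin 4 × Fin 4) :
    ContDiff ℝ (⊤ : ℕ∞) (fun x => Z2c g x q) :=
  contDiff_pd (contDiff_Z1c hg (q.1, q.2.1, q.2.2.1)) q.2.2.2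

theorem contDiff_jet2 {g : (Fin 4 → ℝ) → (Fin 4 × Fin 4) → ℝ}
    (hg : ∀ p, ContDiff ℝ (⊤ : ℕ∞) fun x => g x p) : ContDiff ℝ (⊤ : ℕ∞) (jet2 g) := by
  have h : jet2 g = fun x => ((x, g x, Z1c g x, Z2c g x) : Jet2) := rfl
  rw [h]
  exact contDiff_id.prodMk ((contDiff_pi.2 hg).prodMk
    ((contDiff_pi.2 fun p => contDiff_Z1c hg p).prodMk (contDiff_pi.2 fun q => contDiff_Z2c hg q)))

theorem contDiff_mom4 {L : Jet2 → ℝ} (hL : ContDiff ℝ (⊤ : ℕ∞) L)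
    {g : (Fin 4 → ℝ) → (Fin 4 × Fin 4) → ℝ} (hg : ∀ p, ContDiff ℝ (⊤ : ℕ∞) fun x => g x p)
    (q : Fin 4 × Fin 4 × Fin 4 × Fin 4) : ContDiff ℝ (⊤ : ℕ∞) (fun x => mom4 L g x q) :=
  ((hL.fderiv_right (by simp)).comp (contDiff_jet2 hg)).clm_apply contDiff_const

/- linearity of the prolonged transformation in the fiber variables -/
theorem transY_line (K : Fin 4 → Fin 4 → ℝ) (y1 y2 : (Fin 4 × Fin 4) → ℝ) (s : ℝ) :
    transY K (y1 + s • y2) = transY K y1 + s • transY K y2 := by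
  funext p
  simp only [transY, Pi.add_apply, Pi.smul_apply, smul_eq_mul, Finset.mul_sum,
    ← Finset.sum_add_distrib]
  exact Finset.sum_congr rfl fun μ _ => Finset.sum_congr rfl fun ν _ => by ring

theorem transZ1_line (K : Fin 4 → Fin 4 → ℝ) (H : Fin 4 → Fin 4 → Fin 4 → ℝ)
    (y1 y2 : (Fin 4 × Fin 4) → ℝ) (z1 z2 : (Fin 4 × Fin 4 × Fin 4) → ℝ) (s : ℝ) :
    transZ1 K H (y1 + s • y2) (z1 + s • z2)
      = transZ1 K H y1 z1 + s • transZ1 K H y2 z2 := by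
  funext p
  simp only [transZ1, Pi.add_apply, Pi.smul_apply, smul_eq_mul, mul_add, Finset.mul_sum,
    ← Finset.sum_add_distrib]
  refine Finset.sum_congr rfl fun μ _ => Finset.sum_congr rfl fun ν _ => ?_
  have e : ∑ a, (z1 (μ,ν,a) + s * z2 (μ,ν,a)) * K μ p.1 * K ν p.2.1 * K a p.2.2
      = (∑ a, z1 (μ,ν,a) * K μ p.1 * K ν p.2.1 * K a p.2.2)
        + ∑ a, s * (z2 (μ,ν,a) * K μ p.1 * K ν p.2.1 * K a p.2.2) := by
    rw [← Finset.sum_add_distrib]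
    exact Finset.sum_congr rfl fun a _ => by ring
  rw [e]
  ring

theorem sum1_split (f g : Fin 4 → ℝ) (s : ℝ) :
    ∑ a, (f a + s * g a) = (∑ a, f a) + s * ∑ a, g a := by
  rw [Finset.sum_add_distrib, Finset.mul_sum]

theorem sum2_split (f g : Fin 4 → Fin 4 → ℝ) (s : ℝ) :
    ∑ a, ∑ b, (f a b + s * g a b) = (∑ a, ∑ b, f a b) + s * ∑ a, ∑ b, g a b := by
  rw [show ∑ a, ∑ b, (f a b + s * g a b) = ∑ a, ((∑ b, f a b) + s * ∑ b, g a b) from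
    Finset.sum_congr rfl fun a _ => sum1_split _ _ _]
  exact sum1_split _ _ _

theorem sum3_split (f g : Fin 4 → Fin 4 → Fin 4 → ℝ) (s : ℝ) :
    ∑ a, ∑ b, ∑ c, (f a b c + s * g a b c)
      = (∑ a, ∑ b, ∑ c, f a b c) + s * ∑ a, ∑ b, ∑ c, g a b c := by
  rw [show ∑ a, ∑ b, ∑ c, (f a b c + s * g a b c)
      = ∑ a, ((∑ b, ∑ c, f a b c) + s * ∑ b, ∑ c, g a b c) from
    Finset.sum_congr rfl fun a _ => sum2_split _ _ _]
  exact sum1_split _ _ _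

theorem sum4_split (f g : Fin 4 → Fin 4 → Fin 4 → Fin 4 → ℝ) (s : ℝ) :
    ∑ a, ∑ b, ∑ c, ∑ d, (f a b c d + s * g a b c d)
      = (∑ a, ∑ b, ∑ c, ∑ d, f a b c d) + s * ∑ a, ∑ b, ∑ c, ∑ d, g a b c d := by
  rw [show ∑ a, ∑ b, ∑ c, ∑ d, (f a b c d + s * g a b c d)
      = ∑ a, ((∑ b, ∑ c, ∑ d, f a b c d) + s * ∑ b, ∑ c, ∑ d, g a b c d) from
    Finset.sum_congr rfl fun a _ => sum3_split _ _ _]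
  exact sum1_split _ _ _

theorem sum2_add (f g : Fin 4 → Fin 4 → ℝ) :
    ∑ a, ∑ b, (f a b + g a b) = (∑ a, ∑ b, f a b) + ∑ a, ∑ b, g a b := by
  rw [← Finset.sum_add_distrib]
  exact Finset.sum_congr rfl fun a _ => Finset.sum_add_distrib

theorem sum3_add (f g : Fin 4 → Fin 4 → Fin 4 → ℝ) :
    ∑ a, ∑ b, ∑ c, (f a b c + g a b c)
      = (∑ a, ∑ b, ∑ c, f a b c) + ∑ a, ∑ b, ∑ c, g a b c := by
  rw [← Finset.sum_add_distrib]
  exact Finset.sum_congr rfl fun a _ => sum2_add _ _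

theorem transZ2_line (K : Fin 4 → Fin 4 → ℝ) (H : Fin 4 → Fin 4 → Fin 4 → ℝ)
    (T : Fin 4 → Fin 4 → Fin 4 → Fin 4 → ℝ)
    (y1 y2 : (Fin 4 × Fin 4) → ℝ) (z1 z1' : (Fin 4 × Fin 4 × Fin 4) → ℝ)
    (z2 z2' : (Fin 4 × Fin 4 × Fin 4 × Fin 4) → ℝ) (s : ℝ) :
    transZ2 K H T (y1 + s • y2) (z1 + s • z1') (z2 + s • z2')
      = transZ2 K H T y1 z1 z2 + s • transZ2 K H T y2 z1' z2' := by
  funext p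
  simp only [transZ2, Pi.add_apply, Pi.smul_apply, smul_eq_mul]
  rw [show (∑ μ, ∑ ν, ∑ a, ∑ c, (z2 (μ,ν,a,c) + s * z2' (μ,ν,a,c))
        * K μ p.1 * K ν p.2.1 * K a p.2.2.1 * K c p.2.2.2)
      = ∑ μ, ∑ ν, ∑ a, ∑ c, (z2 (μ,ν,a,c) * K μ p.1 * K ν p.2.1 * K a p.2.2.1 * K c p.2.2.2
        + s * (z2' (μ,ν,a,c) * K μ p.1 * K ν p.2.1 * K a p.2.2.1 * K c p.2.2.2)) from
    Finset.sum_congr rfl fun μ _ => Finset.sum_congr rfl fun ν _ =>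
      Finset.sum_congr rfl fun a _ => Finset.sum_congr rfl fun c _ => by ring,
    sum4_split]
  rw [show (∑ μ, ∑ ν, ∑ a, (z1 (μ,ν,a) + s * z1' (μ,ν,a)) *
        (H μ p.1 p.2.2.2 * K ν p.2.1 * K a p.2.2.1
          + K μ p.1 * H ν p.2.1 p.2.2.2 * K a p.2.2.1
          + K μ p.1 * K ν p.2.1 * H a p.2.2.1 p.2.2.2))
      = ∑ μ, ∑ ν, ∑ a, (z1 (μ,ν,a) * (H μ p.1 p.2.2.2 * K ν p.2.1 * K a p.2.2.1
          + K μ p.1 * H ν p.2.1 p.2.2.2 * K a p.2.2.1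
          + K μ p.1 * K ν p.2.1 * H a p.2.2.1 p.2.2.2)
        + s * (z1' (μ,ν,a) * (H μ p.1 p.2.2.2 * K ν p.2.1 * K a p.2.2.1
          + K μ p.1 * H ν p.2.1 p.2.2.2 * K a p.2.2.1
          + K μ p.1 * K ν p.2.1 * H a p.2.2.1 p.2.2.2))) from
    Finset.sum_congr rfl fun μ _ => Finset.sum_congr rfl fun ν _ =>
      Finset.sum_congr rfl fun a _ => by ring,
    sum3_split]
  rw [show (∑ μ, ∑ ν, ∑ c, (z1 (μ,ν,c) + s * z1' (μ,ν,c)) * K c p.2.2.2 *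
        (H μ p.1 p.2.2.1 * K ν p.2.1 + K μ p.1 * H ν p.2.1 p.2.2.1))
      = ∑ μ, ∑ ν, ∑ c, (z1 (μ,ν,c) * K c p.2.2.2 *
          (H μ p.1 p.2.2.1 * K ν p.2.1 + K μ p.1 * H ν p.2.1 p.2.2.1)
        + s * (z1' (μ,ν,c) * K c p.2.2.2 *
          (H μ p.1 p.2.2.1 * K ν p.2.1 + K μ p.1 * H ν p.2.1 p.2.2.1))) from
    Finset.sum_congr rfl fun μ _ => Finset.sum_congr rfl fun ν _ =>
      Finset.sum_congr rfl fun c _ => by ring,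
    sum3_split]
  rw [show (∑ μ, ∑ ν, (y1 (μ,ν) + s * y2 (μ,ν)) *
        (T μ p.1 p.2.2.1 p.2.2.2 * K ν p.2.1 + H μ p.1 p.2.2.1 * H ν p.2.1 p.2.2.2
          + H μ p.1 p.2.2.2 * H ν p.2.1 p.2.2.1 + K μ p.1 * T ν p.2.1 p.2.2.1 p.2.2.2))
      = ∑ μ, ∑ ν, (y1 (μ,ν) * (T μ p.1 p.2.2.1 p.2.2.2 * K ν p.2.1
          + H μ p.1 p.2.2.1 * H ν p.2.1 p.2.2.2
          + H μ p.1 p.2.2.2 * H ν p.2.1 p.2.2.1 + K μ p.1 * T ν p.2.1 p.2.2.1 p.2.2.2)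
        + s * (y2 (μ,ν) * (T μ p.1 p.2.2.1 p.2.2.2 * K ν p.2.1
          + H μ p.1 p.2.2.1 * H ν p.2.1 p.2.2.2
          + H μ p.1 p.2.2.2 * H ν p.2.1 p.2.2.1 + K μ p.1 * T ν p.2.1 p.2.2.1 p.2.2.2))) from
    Finset.sum_congr rfl fun μ _ => Finset.sum_congr rfl fun ν _ => by ring,
    sum2_split]
  ring

theorem jet_expand (T : Jet2 →L[ℝ] ℝ) (w1 : (Fin 4 × Fin 4 × Fin 4) → ℝ)
    (w2 : (Fin 4 × Fin 4 × Fin 4 × Fin 4) → ℝ) :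
    T (0, 0, w1, w2) = (∑ p, w1 p * T (0, 0, Pi.single p 1, 0))
      + ∑ q, w2 q * T (0, 0, 0, Pi.single q 1) := by
  have h : ((0, 0, w1, w2) : Jet2) = (0,0,w1,0) + (0,0,0,w2) := by
    simp [Prod.ext_iff]
  have h1 : ((0,0,w1,0) : Jet2) = ∑ p, w1 p • ((0,0,Pi.single p 1,0) : Jet2) := by
    refine Prod.ext ?_ (Prod.ext ?_ (Prod.ext ?_ ?_)) <;>
      simp [Prod.fst_sum, Prod.snd_sum] <;>
      funext k <;> simp [Finset.sum_apply, Pi.single_apply]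
  have h2 : ((0,0,0,w2) : Jet2) = ∑ q, w2 q • ((0,0,0,Pi.single q 1) : Jet2) := by
    refine Prod.ext ?_ (Prod.ext ?_ (Prod.ext ?_ ?_)) <;>
      simp [Prod.fst_sum, Prod.snd_sum] <;>
      funext k <;> simp [Finset.sum_apply, Pi.single_apply]
  rw [h, map_add, h1, h2, map_sum, map_sum]
  congr 1 <;> refine Finset.sum_congr rfl fun j _ => ?_
  · rw [map_smul]; simp
  · rw [map_smul]; simp

section Prolong
variable {φ : (Fin 4 → ℝ) → (Fin 4 → ℝ)} {g g' : (Fin 4 → ℝ) → (Fin 4 × Fin 4) → ℝ}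
  (hφ : ContDiff ℝ (⊤ : ℕ∞) φ) (hg : ∀ p, ContDiff ℝ (⊤ : ℕ∞) fun x => g x p)
  (hrel : ∀ x' p, g' x' p = ∑ μ, ∑ ν, g (φ x') (μ, ν) * Kc φ x' μ p.1 * Kc φ x' ν p.2)

include hφ hg hrel in
theorem prolongZ1 : ∀ (x' : Fin 4 → ℝ) (p : Fin 4 × Fin 4 × Fin 4),
    Z1c g' x' p = transZ1 (Kc φ x') (Hc φ x') (g (φ x')) (Z1c g (φ x')) p := by
  intro x' p
  have dφ : DifferentiableAt ℝ φ x' := (hφ.differentiable (by simp)).differentiableAt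
  have dgφ : ∀ μ ν : Fin 4, DifferentiableAt ℝ (fun t => g (φ t) (μ, ν)) x' :=
    fun μ ν => (((hg (μ,ν)).comp hφ).differentiable (by simp)).differentiableAt
  have dK : ∀ (t : Fin 4 → ℝ) (μ μ' : Fin 4), DifferentiableAt ℝ (fun s => Kc φ s μ μ') t :=
    fun t μ μ' => ((contDiff_K hφ μ μ').differentiable (by simp)).differentiableAt
  have hchain : ∀ μ ν : Fin 4, pd p.2.2 (fun t => g (φ t) (μ, ν)) x'
      = ∑ a, Z1c g (φ x') (μ, ν, a) * Kc φ x' a p.2.2 := by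
    intro μ ν
    exact pd_comp (((hg (μ,ν)).differentiable (by simp)).differentiableAt) dφ p.2.2
  calc Z1c g' x' p
      = pd p.2.2 (fun t => ∑ μ, ∑ ν,
          g (φ t) (μ, ν) * Kc φ t μ p.1 * Kc φ t ν p.2.1) x' :=
        pd_congr (fun t => hrel t (p.1, p.2.1)) p.2.2 x'
    _ = ∑ μ, ∑ ν, pd p.2.2 (fun t =>
          g (φ t) (μ, ν) * Kc φ t μ p.1 * Kc φ t ν p.2.1) x' := by
        rw [pd_sum (fun μ _ => DifferentiableAt.fun_sum fun ν _ =>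
          ((dgφ μ ν).fun_mul (dK x' μ p.1)).fun_mul (dK x' ν p.2.1))]
        exact Finset.sum_congr rfl fun μ _ => pd_sum (fun ν _ =>
          ((dgφ μ ν).mul (dK x' μ p.1)).mul (dK x' ν p.2.1)) p.2.2
    _ = ∑ μ, ∑ ν, ((∑ a, Z1c g (φ x') (μ, ν, a) * Kc φ x' a p.2.2)
            * Kc φ x' μ p.1 * Kc φ x' ν p.2.1
          + g (φ x') (μ, ν) * Hc φ x' μ p.1 p.2.2 * Kc φ x' ν p.2.1
          + g (φ x') (μ, ν) * Kc φ x' μ p.1 * Hc φ x' ν p.2.1 p.2.2) := by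
        refine Finset.sum_congr rfl fun μ _ => Finset.sum_congr rfl fun ν _ => ?_
        rw [pd_mul3 (dgφ μ ν) (dK x' μ p.1) (dK x' ν p.2.1), hchain μ ν]
        rfl
    _ = transZ1 (Kc φ x') (Hc φ x') (g (φ x')) (Z1c g (φ x')) p := by
        simp only [transZ1]
        rw [← Finset.sum_add_distrib, ← Finset.sum_add_distrib]
        refine Finset.sum_congr rfl fun μ _ => ?_
        rw [← Finset.sum_add_distrib, ← Finset.sum_add_distrib]
        refine Finset.sum_congr rfl fun ν _ => ?_
        rw [Finset.sum_mul, Finset.sum_mul,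
          show (∑ a, Z1c g (φ x') (μ,ν,a) * Kc φ x' a p.2.2 * Kc φ x' μ p.1 * Kc φ x' ν p.2.1)
            = ∑ a, Z1c g (φ x') (μ,ν,a) * Kc φ x' μ p.1 * Kc φ x' ν p.2.1 * Kc φ x' a p.2.2 from
          Finset.sum_congr rfl fun a _ => by ring]
end Prolong

theorem pd_mul4 {f1 f2 f3 f4 : (Fin 4 → ℝ) → ℝ} {x} (h1 : DifferentiableAt ℝ f1 x)
    (h2 : DifferentiableAt ℝ f2 x) (h3 : DifferentiableAt ℝ f3 x)
    (h4 : DifferentiableAt ℝ f4 x) (i : Fin 4) :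
    pd i (fun t => f1 t * f2 t * f3 t * f4 t) x
      = pd i f1 x * f2 x * f3 x * f4 x + f1 x * pd i f2 x * f3 x * f4 x
        + f1 x * f2 x * pd i f3 x * f4 x + f1 x * f2 x * f3 x * pd i f4 x := by
  rw [pd_mul ((h1.fun_mul h2).fun_mul h3) h4, pd_mul (h1.fun_mul h2) h3, pd_mul h1 h2]
  ring

section Prolong2
variable {φ : (Fin 4 → ℝ) → (Fin 4 → ℝ)} {g g' : (Fin 4 → ℝ) → (Fin 4 × Fin 4) → ℝ}
  (hφ : ContDiff ℝ (⊤ : ℕ∞) φ) (hg : ∀ p, ContDiff ℝ (⊤ : ℕ∞) fun x => g x p)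
  (hrel : ∀ x' p, g' x' p = ∑ μ, ∑ ν, g (φ x') (μ, ν) * Kc φ x' μ p.1 * Kc φ x' ν p.2)

include hφ hg hrel in
theorem prolongZ2 : ∀ (x' : Fin 4 → ℝ) (q : Fin 4 × Fin 4 × Fin 4 × Fin 4),
    Z2c g' x' q = transZ2 (Kc φ x') (Hc φ x') (Tc φ x')
      (g (φ x')) (Z1c g (φ x')) (Z2c g (φ x')) q := by
  intro x' q
  obtain ⟨p1, p2, p3, i⟩ := q
  have dφ : DifferentiableAt ℝ φ x' := (hφ.differentiable (by simp)).differentiableAt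
  have dgφ : ∀ μ ν : Fin 4, DifferentiableAt ℝ (fun t => g (φ t) (μ, ν)) x' :=
    fun μ ν => (((hg (μ,ν)).comp hφ).differentiable (by simp)).differentiableAt
  have dK : ∀ (μ μ' : Fin 4), DifferentiableAt ℝ (fun s => Kc φ s μ μ') x' :=
    fun μ μ' => ((contDiff_K hφ μ μ').differentiable (by simp)).differentiableAt
  have dH : ∀ (μ μ' α' : Fin 4), DifferentiableAt ℝ (fun s => Hc φ s μ μ' α') x' :=
    fun μ μ' α' => ((contDiff_H hφ μ μ' α').differentiable (by simp)).differentiableAt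
  have dZ1φ : ∀ (r : Fin 4 × Fin 4 × Fin 4), DifferentiableAt ℝ (fun t => Z1c g (φ t) r) x' :=
    fun r => (((contDiff_Z1c hg r).comp hφ).differentiable (by simp)).differentiableAt
  have hchainZ1 : ∀ μ ν a : Fin 4, pd i (fun t => Z1c g (φ t) (μ, ν, a)) x'
      = ∑ c, Z2c g (φ x') (μ, ν, a, c) * Kc φ x' c i :=
    fun μ ν a => pd_comp (((contDiff_Z1c hg (μ,ν,a)).differentiable (by simp)).differentiableAt)
      dφ i
  have hchainY : ∀ μ ν : Fin 4, pd i (fun t => g (φ t) (μ, ν)) x'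
      = ∑ c, Z1c g (φ x') (μ, ν, c) * Kc φ x' c i :=
    fun μ ν => pd_comp (((hg (μ,ν)).differentiable (by simp)).differentiableAt) dφ i
  -- the three groups of the transformed first jet
  set F1 : (Fin 4 → ℝ) → ℝ := fun t => ∑ μ, ∑ ν, ∑ a,
    Z1c g (φ t) (μ, ν, a) * Kc φ t μ p1 * Kc φ t ν p2 * Kc φ t a p3 with hF1
  set F2 : (Fin 4 → ℝ) → ℝ := fun t => ∑ μ, ∑ ν,
    g (φ t) (μ, ν) * Hc φ t μ p1 p3 * Kc φ t ν p2 with hF2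
  set F3 : (Fin 4 → ℝ) → ℝ := fun t => ∑ μ, ∑ ν,
    g (φ t) (μ, ν) * Kc φ t μ p1 * Hc φ t ν p2 p3 with hF3
  have dF1 : DifferentiableAt ℝ F1 x' := by
    exact DifferentiableAt.fun_sum fun μ _ => DifferentiableAt.fun_sum fun ν _ =>
      DifferentiableAt.fun_sum fun a _ =>
        (((dZ1φ (μ,ν,a)).mul (dK μ p1)).mul (dK ν p2)).mul (dK a p3)
  have dF2 : DifferentiableAt ℝ F2 x' := by
    exact DifferentiableAt.fun_sum fun μ _ => DifferentiableAt.fun_sum fun ν _ =>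
      ((dgφ μ ν).mul (dH μ p1 p3)).mul (dK ν p2)
  have dF3 : DifferentiableAt ℝ F3 x' := by
    exact DifferentiableAt.fun_sum fun μ _ => DifferentiableAt.fun_sum fun ν _ =>
      ((dgφ μ ν).mul (dK μ p1)).mul (dH ν p2 p3)
  have step0 : Z2c g' x' (p1, p2, p3, i) = pd i (fun t => F1 t + F2 t + F3 t) x' := by
    refine pd_congr (fun t => ?_) i x'
    exact prolongZ1 hφ hg hrel t (p1, p2, p3)
  have pdF1 : pd i F1 x'
      = (∑ μ, ∑ ν, ∑ a, ∑ c, Z2c g (φ x') (μ, ν, a, c)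
          * Kc φ x' μ p1 * Kc φ x' ν p2 * Kc φ x' a p3 * Kc φ x' c i)
        + ∑ μ, ∑ ν, ∑ a, Z1c g (φ x') (μ, ν, a) *
            (Hc φ x' μ p1 i * Kc φ x' ν p2 * Kc φ x' a p3
              + Kc φ x' μ p1 * Hc φ x' ν p2 i * Kc φ x' a p3
              + Kc φ x' μ p1 * Kc φ x' ν p2 * Hc φ x' a p3 i) := by
    have h1 : pd i F1 x' = ∑ μ, ∑ ν, ∑ a, pd i (fun t =>
        Z1c g (φ t) (μ, ν, a) * Kc φ t μ p1 * Kc φ t ν p2 * Kc φ t a p3) x' := by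
      rw [hF1, pd_sum (fun μ _ => DifferentiableAt.fun_sum fun ν _ => DifferentiableAt.fun_sum
        fun a _ => (((dZ1φ (μ,ν,a)).fun_mul (dK μ p1)).fun_mul (dK ν p2)).fun_mul (dK a p3))]
      refine Finset.sum_congr rfl fun μ _ => ?_
      rw [pd_sum (fun ν _ => DifferentiableAt.fun_sum
        fun a _ => (((dZ1φ (μ,ν,a)).fun_mul (dK μ p1)).fun_mul (dK ν p2)).fun_mul (dK a p3))]
      refine Finset.sum_congr rfl fun ν _ => ?_
      exact pd_sum (fun a _ =>
        (((dZ1φ (μ,ν,a)).mul (dK μ p1)).mul (dK ν p2)).mul (dK a p3)) i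
    rw [h1, ← sum3_add]
    refine Finset.sum_congr rfl fun μ _ => Finset.sum_congr rfl fun ν _ =>
      Finset.sum_congr rfl fun a _ => ?_
    rw [pd_mul4 (dZ1φ (μ,ν,a)) (dK μ p1) (dK ν p2) (dK a p3), hchainZ1 μ ν a]
    rw [show (∑ c, Z2c g (φ x') (μ,ν,a,c) * Kc φ x' c i)
          * Kc φ x' μ p1 * Kc φ x' ν p2 * Kc φ x' a p3
        = ∑ c, Z2c g (φ x') (μ,ν,a,c) * Kc φ x' μ p1 * Kc φ x' ν p2 * Kc φ x' a p3
            * Kc φ x' c i from by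
      rw [Finset.sum_mul, Finset.sum_mul, Finset.sum_mul]
      exact Finset.sum_congr rfl fun c _ => by ring]
    have e2 : pd i (fun t => Kc φ t μ p1) x' = Hc φ x' μ p1 i := rfl
    have e3 : pd i (fun t => Kc φ t ν p2) x' = Hc φ x' ν p2 i := rfl
    have e4 : pd i (fun t => Kc φ t a p3) x' = Hc φ x' a p3 i := rfl
    rw [e2, e3, e4]
    ring
  have pdF2 : pd i F2 x'
      = (∑ μ, ∑ ν, ∑ c, Z1c g (φ x') (μ, ν, c) * Kc φ x' c i
          * Hc φ x' μ p1 p3 * Kc φ x' ν p2)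
        + ∑ μ, ∑ ν, (g (φ x') (μ, ν) * Tc φ x' μ p1 p3 i * Kc φ x' ν p2
            + g (φ x') (μ, ν) * Hc φ x' μ p1 p3 * Hc φ x' ν p2 i) := by
    have h1 : pd i F2 x' = ∑ μ, ∑ ν, pd i (fun t =>
        g (φ t) (μ, ν) * Hc φ t μ p1 p3 * Kc φ t ν p2) x' := by
      rw [hF2, pd_sum (fun μ _ => DifferentiableAt.fun_sum fun ν _ =>
        ((dgφ μ ν).fun_mul (dH μ p1 p3)).fun_mul (dK ν p2))]
      exact Finset.sum_congr rfl fun μ _ => pd_sum (fun ν _ =>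
        ((dgφ μ ν).mul (dH μ p1 p3)).mul (dK ν p2)) i
    rw [h1, ← sum2_add]
    refine Finset.sum_congr rfl fun μ _ => Finset.sum_congr rfl fun ν _ => ?_
    rw [pd_mul3 (dgφ μ ν) (dH μ p1 p3) (dK ν p2), hchainY μ ν]
    rw [show (∑ c, Z1c g (φ x') (μ,ν,c) * Kc φ x' c i) * Hc φ x' μ p1 p3 * Kc φ x' ν p2
        = ∑ c, Z1c g (φ x') (μ,ν,c) * Kc φ x' c i * Hc φ x' μ p1 p3 * Kc φ x' ν p2 from by
      rw [Finset.sum_mul, Finset.sum_mul]]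
    have e2 : pd i (fun t => Hc φ t μ p1 p3) x' = Tc φ x' μ p1 p3 i := rfl
    have e3 : pd i (fun t => Kc φ t ν p2) x' = Hc φ x' ν p2 i := rfl
    rw [e2, e3]
    ring
  have pdF3 : pd i F3 x'
      = (∑ μ, ∑ ν, ∑ c, Z1c g (φ x') (μ, ν, c) * Kc φ x' c i
          * Kc φ x' μ p1 * Hc φ x' ν p2 p3)
        + ∑ μ, ∑ ν, (g (φ x') (μ, ν) * Hc φ x' μ p1 i * Hc φ x' ν p2 p3
            + g (φ x') (μ, ν) * Kc φ x' μ p1 * Tc φ x' ν p2 p3 i) := by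
    have h1 : pd i F3 x' = ∑ μ, ∑ ν, pd i (fun t =>
        g (φ t) (μ, ν) * Kc φ t μ p1 * Hc φ t ν p2 p3) x' := by
      rw [hF3, pd_sum (fun μ _ => DifferentiableAt.fun_sum fun ν _ =>
        ((dgφ μ ν).fun_mul (dK μ p1)).fun_mul (dH ν p2 p3))]
      exact Finset.sum_congr rfl fun μ _ => pd_sum (fun ν _ =>
        ((dgφ μ ν).mul (dK μ p1)).mul (dH ν p2 p3)) i
    rw [h1, ← sum2_add]
    refine Finset.sum_congr rfl fun μ _ => Finset.sum_congr rfl fun ν _ => ?_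
    rw [pd_mul3 (dgφ μ ν) (dK μ p1) (dH ν p2 p3), hchainY μ ν]
    rw [show (∑ c, Z1c g (φ x') (μ,ν,c) * Kc φ x' c i) * Kc φ x' μ p1 * Hc φ x' ν p2 p3
        = ∑ c, Z1c g (φ x') (μ,ν,c) * Kc φ x' c i * Kc φ x' μ p1 * Hc φ x' ν p2 p3 from by
      rw [Finset.sum_mul, Finset.sum_mul]]
    have e2 : pd i (fun t => Kc φ t μ p1) x' = Hc φ x' μ p1 i := rfl
    have e3 : pd i (fun t => Hc φ t ν p2 p3) x' = Tc φ x' ν p2 p3 i := rfl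
    rw [e2, e3]
    ring
  rw [step0, pd_add (dF1.fun_add dF2) dF3, pd_add dF1 dF2, pdF1, pdF2, pdF3]
  simp only [transZ2]
  have hT3 : (∑ μ, ∑ ν, ∑ c, Z1c g (φ x') (μ, ν, c) * Kc φ x' c i *
        (Hc φ x' μ p1 p3 * Kc φ x' ν p2 + Kc φ x' μ p1 * Hc φ x' ν p2 p3))
      = (∑ μ, ∑ ν, ∑ c, Z1c g (φ x') (μ, ν, c) * Kc φ x' c i
          * Hc φ x' μ p1 p3 * Kc φ x' ν p2)
        + ∑ μ, ∑ ν, ∑ c, Z1c g (φ x') (μ, ν, c) * Kc φ x' c i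
          * Kc φ x' μ p1 * Hc φ x' ν p2 p3 := by
    rw [← sum3_add]
    exact Finset.sum_congr rfl fun μ _ => Finset.sum_congr rfl fun ν _ =>
      Finset.sum_congr rfl fun c _ => by ring
  have hT4 : (∑ μ, ∑ ν, g (φ x') (μ, ν) *
        (Tc φ x' μ p1 p3 i * Kc φ x' ν p2 + Hc φ x' μ p1 p3 * Hc φ x' ν p2 i
          + Hc φ x' μ p1 i * Hc φ x' ν p2 p3 + Kc φ x' μ p1 * Tc φ x' ν p2 p3 i))
      = (∑ μ, ∑ ν, (g (φ x') (μ, ν) * Tc φ x' μ p1 p3 i * Kc φ x' ν p2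
            + g (φ x') (μ, ν) * Hc φ x' μ p1 p3 * Hc φ x' ν p2 i))
        + ∑ μ, ∑ ν, (g (φ x') (μ, ν) * Hc φ x' μ p1 i * Hc φ x' ν p2 p3
            + g (φ x') (μ, ν) * Kc φ x' μ p1 * Tc φ x' ν p2 p3 i) := by
    rw [← sum2_add]
    exact Finset.sum_congr rfl fun μ _ => Finset.sum_congr rfl fun ν _ => by ring
  rw [hT3, hT4]
  ring
end Prolong2

section Fiber
variable {L : Jet2 → ℝ} {φ ψ : (Fin 4 → ℝ) → (Fin 4 → ℝ)}
  {g g' : (Fin 4 → ℝ) → (Fin 4 × Fin 4) → ℝ}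
  (hL : ContDiff ℝ (⊤ : ℕ∞) L) (hφ : ContDiff ℝ (⊤ : ℕ∞) φ) (hψ : ContDiff ℝ (⊤ : ℕ∞) ψ)
  (hg : ∀ p, ContDiff ℝ (⊤ : ℕ∞) fun x => g x p)
  (hrel : ∀ x' p, g' x' p = ∑ μ, ∑ ν, g (φ x') (μ, ν) * Kc φ x' μ p.1 * Kc φ x' ν p.2)
  (hdensity : ∀ (x' : Fin 4 → ℝ) (y : (Fin 4 × Fin 4) → ℝ)
      (z1 : (Fin 4 × Fin 4 × Fin 4) → ℝ) (z2 : (Fin 4 × Fin 4 × Fin 4 × Fin 4) → ℝ),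
      L (x', transY (Kc φ x') y, transZ1 (Kc φ x') (Hc φ x') y z1,
          transZ2 (Kc φ x') (Hc φ x') (Tc φ x') y z1 z2) * detJc φ ψ x'
        = L (φ x', y, z1, z2))

include hφ hg hrel in
theorem prolong : ∀ x' : Fin 4 → ℝ,
    jet2 g' x' = (x', transY (Kc φ x') (g (φ x')),
      transZ1 (Kc φ x') (Hc φ x') (g (φ x')) (Z1c g (φ x')),
      transZ2 (Kc φ x') (Hc φ x') (Tc φ x') (g (φ x')) (Z1c g (φ x')) (Z2c g (φ x'))) := by
  intro x'
  rw [jet2_eq]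
  refine Prod.ext rfl (Prod.ext ?_ (Prod.ext ?_ ?_))
  · funext p
    exact hrel x' p
  · funext p
    exact prolongZ1 hφ hg hrel x' p
  · funext q
    exact prolongZ2 hφ hg hrel x' q

include hL hφ hg hrel hdensity in
theorem fiber_deriv : ∀ (x' : Fin 4 → ℝ) (vy : (Fin 4 × Fin 4) → ℝ)
    (vz1 : (Fin 4 × Fin 4 × Fin 4) → ℝ) (vz2 : (Fin 4 × Fin 4 × Fin 4 × Fin 4) → ℝ),
    fderiv ℝ L (jet2 g' x') (0, transY (Kc φ x') vy,
        transZ1 (Kc φ x') (Hc φ x') vy vz1,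
        transZ2 (Kc φ x') (Hc φ x') (Tc φ x') vy vz1 vz2) * detJc φ ψ x'
      = fderiv ℝ L (jet2 g (φ x')) (0, vy, vz1, vz2) := by
  intro x' vy vz1 vz2
  set K := Kc φ x'
  set Hh := Hc φ x'
  set Tt := Tc φ x'
  set Y := g (φ x') with hY
  set Z1v := Z1c g (φ x') with hZ1v
  set Z2v := Z2c g (φ x') with hZ2v
  set W : Jet2 := (0, transY K vy, transZ1 K Hh vy vz1, transZ2 K Hh Tt vy vz1 vz2) with hW
  set V : Jet2 := (0, vy, vz1, vz2) with hV
  set B' : Jet2 := jet2 g' x' with hB'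
  set B : Jet2 := jet2 g (φ x') with hB
  have hBeq : B = (φ x', Y, Z1v, Z2v) := jet2_eq g (φ x')
  have hB'eq : B' = (x', transY K Y, transZ1 K Hh Y Z1v, transZ2 K Hh Tt Y Z1v Z2v) :=
    prolong hφ hg hrel x'
  have hcurve : ∀ t : ℝ, ((x', transY K (Y + t • vy),
      transZ1 K Hh (Y + t • vy) (Z1v + t • vz1),
      transZ2 K Hh Tt (Y + t • vy) (Z1v + t • vz1) (Z2v + t • vz2)) : Jet2) = B' + t • W := by
    intro t
    rw [transY_line, transZ1_line, transZ2_line, hB'eq]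
    refine Prod.ext ?_ (Prod.ext ?_ (Prod.ext ?_ ?_)) <;> simp [hW]
  have hBcurve : ∀ t : ℝ, ((φ x', Y + t • vy, Z1v + t • vz1, Z2v + t • vz2) : Jet2)
      = B + t • V := by
    intro t
    rw [hBeq]
    refine Prod.ext ?_ (Prod.ext ?_ (Prod.ext ?_ ?_)) <;> simp [hV]
  have hFG : ∀ t : ℝ, L (B' + t • W) * detJc φ ψ x' = L (B + t • V) := by
    intro t
    rw [← hcurve t, ← hBcurve t]
    exact hdensity x' (Y + t • vy) (Z1v + t • vz1) (Z2v + t • vz2)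
  have hdL : Differentiable ℝ L := hL.differentiable (by simp)
  have hlineW : HasDerivAt (fun t : ℝ => B' + t • W) W 0 := by
    simpa using ((hasDerivAt_id (0:ℝ)).smul_const W).const_add B'
  have hlineV : HasDerivAt (fun t : ℝ => B + t • V) V 0 := by
    simpa using ((hasDerivAt_id (0:ℝ)).smul_const V).const_add B
  have hderW : HasDerivAt (fun t : ℝ => L (B' + t • W) * detJc φ ψ x')
      (fderiv ℝ L B' W * detJc φ ψ x') 0 := by
    refine HasDerivAt.mul_const ?_ _
    have h0 : B' + (0:ℝ) • W = B' := by simp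
    have := (hdL (B' + (0:ℝ) • W)).hasFDerivAt.comp_hasDerivAt 0 hlineW
    rwa [h0] at this
  have hderV : HasDerivAt (fun t : ℝ => L (B + t • V)) (fderiv ℝ L B V) 0 := by
    have h0 : B + (0:ℝ) • V = B := by simp
    have := (hdL (B + (0:ℝ) • V)).hasFDerivAt.comp_hasDerivAt 0 hlineV
    rwa [h0] at this
  have heq : (fun t : ℝ => L (B' + t • W) * detJc φ ψ x') = fun t : ℝ => L (B + t • V) :=
    funext hFG
  rw [heq] at hderW
  exact hderW.unique hderV
end Fiber

theorem transY_zero (K : Fin 4 → Fin 4 → ℝ) : transY K 0 = 0 := by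
  funext p; simp [transY]

theorem transZ1_zero (K : Fin 4 → Fin 4 → ℝ) (H : Fin 4 → Fin 4 → Fin 4 → ℝ) :
    transZ1 K H 0 0 = 0 := by
  funext p; simp [transZ1]

theorem transZ2_single_z2 (K : Fin 4 → Fin 4 → ℝ) (H : Fin 4 → Fin 4 → Fin 4 → ℝ)
    (T : Fin 4 → Fin 4 → Fin 4 → Fin 4 → ℝ) (q : Fin 4 × Fin 4 × Fin 4 × Fin 4) :
    transZ2 K H T 0 0 (Pi.single q 1)
      = fun p' => K q.1 p'.1 * K q.2.1 p'.2.1 * K q.2.2.1 p'.2.2.1 * K q.2.2.2 p'.2.2.2 := by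
  obtain ⟨a, b, c, d⟩ := q
  funext p'
  simp [transZ2, Pi.single_apply, Prod.ext_iff, ite_and, Finset.sum_ite_eq,
    mul_ite, mul_one, mul_zero]

theorem transZ1_single_z1 (K : Fin 4 → Fin 4 → ℝ) (H : Fin 4 → Fin 4 → Fin 4 → ℝ)
    (p : Fin 4 × Fin 4 × Fin 4) :
    transZ1 K H 0 (Pi.single p 1)
      = fun p' => K p.1 p'.1 * K p.2.1 p'.2.1 * K p.2.2 p'.2.2 := by
  obtain ⟨a, b, c⟩ := p
  funext p'
  simp [transZ1, Pi.single_apply, Prod.ext_iff, ite_and, Finset.sum_ite_eq,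
    mul_ite, mul_one, mul_zero]

theorem transZ2_single_z1 (K : Fin 4 → Fin 4 → ℝ) (H : Fin 4 → Fin 4 → Fin 4 → ℝ)
    (T : Fin 4 → Fin 4 → Fin 4 → Fin 4 → ℝ) (p : Fin 4 × Fin 4 × Fin 4) :
    transZ2 K H T 0 (Pi.single p 1) 0
      = fun q' => (H p.1 q'.1 q'.2.2.2 * K p.2.1 q'.2.1 * K p.2.2 q'.2.2.1
          + K p.1 q'.1 * H p.2.1 q'.2.1 q'.2.2.2 * K p.2.2 q'.2.2.1
          + K p.1 q'.1 * K p.2.1 q'.2.1 * H p.2.2 q'.2.2.1 q'.2.2.2)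
        + K p.2.2 q'.2.2.2 * (H p.1 q'.1 q'.2.2.1 * K p.2.1 q'.2.1
          + K p.1 q'.1 * H p.2.1 q'.2.1 q'.2.2.1) := by
  obtain ⟨a, b, c⟩ := p
  funext q'
  simp [transZ2, Pi.single_apply, Prod.ext_iff, ite_and, Finset.sum_ite_eq,
    mul_ite, mul_one, mul_zero]

section Keys
variable {L : Jet2 → ℝ} {φ ψ : (Fin 4 → ℝ) → (Fin 4 → ℝ)}
  {g g' : (Fin 4 → ℝ) → (Fin 4 × Fin 4) → ℝ}
  (hL : ContDiff ℝ (⊤ : ℕ∞) L) (hφ : ContDiff ℝ (⊤ : ℕ∞) φ) (hψ : ContDiff ℝ (⊤ : ℕ∞) ψ)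
  (hg : ∀ p, ContDiff ℝ (⊤ : ℕ∞) fun x => g x p)
  (hrel : ∀ x' p, g' x' p = ∑ μ, ∑ ν, g (φ x') (μ, ν) * Kc φ x' μ p.1 * Kc φ x' ν p.2)
  (hdensity : ∀ (x' : Fin 4 → ℝ) (y : (Fin 4 × Fin 4) → ℝ)
      (z1 : (Fin 4 × Fin 4 × Fin 4) → ℝ) (z2 : (Fin 4 × Fin 4 × Fin 4 × Fin 4) → ℝ),
      L (x', transY (Kc φ x') y, transZ1 (Kc φ x') (Hc φ x') y z1,
          transZ2 (Kc φ x') (Hc φ x') (Tc φ x') y z1 z2) * detJc φ ψ x'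
        = L (φ x', y, z1, z2))

include hL hφ hg hrel hdensity in
theorem key4 : ∀ (x' : Fin 4 → ℝ) (q : Fin 4 × Fin 4 × Fin 4 × Fin 4),
    mom4 L g (φ x') q
      = (∑ q' : Fin 4 × Fin 4 × Fin 4 × Fin 4, mom4 L g' x' q'
          * Kc φ x' q.1 q'.1 * Kc φ x' q.2.1 q'.2.1 * Kc φ x' q.2.2.1 q'.2.2.1
          * Kc φ x' q.2.2.2 q'.2.2.2) * detJc φ ψ x' := by
  intro x' q
  have h := fiber_deriv hL hφ hg hrel hdensity x' 0 0 (Pi.single q 1)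
  rw [transY_zero, transZ1_zero, transZ2_single_z2] at h
  have hexp := jet_expand (fderiv ℝ L (jet2 g' x')) 0
    (fun p' => Kc φ x' q.1 p'.1 * Kc φ x' q.2.1 p'.2.1 * Kc φ x' q.2.2.1 p'.2.2.1
      * Kc φ x' q.2.2.2 p'.2.2.2)
  simp only [Pi.zero_apply, zero_mul, Finset.sum_const_zero, zero_add] at hexp
  rw [hexp] at h
  rw [mom4, ← h]
  congr 1
  exact Finset.sum_congr rfl fun q' _ => by rw [mom4]; ring

include hL hφ hg hrel hdensity in
theorem key3 : ∀ (x' : Fin 4 → ℝ) (μ ν α : Fin 4),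
    fderiv ℝ L (jet2 g (φ x')) (0, 0, Pi.single (μ, ν, α) 1, 0)
      = ((∑ p' : Fin 4 × Fin 4 × Fin 4,
            fderiv ℝ L (jet2 g' x') (0, 0, Pi.single p' 1, 0)
              * Kc φ x' μ p'.1 * Kc φ x' ν p'.2.1 * Kc φ x' α p'.2.2)
          + ∑ q' : Fin 4 × Fin 4 × Fin 4 × Fin 4, mom4 L g' x' q' *
              (Hc φ x' μ q'.1 q'.2.2.2 * Kc φ x' ν q'.2.1 * Kc φ x' α q'.2.2.1
                + Kc φ x' μ q'.1 * Hc φ x' ν q'.2.1 q'.2.2.2 * Kc φ x' α q'.2.2.1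
                + Kc φ x' μ q'.1 * Kc φ x' ν q'.2.1 * Hc φ x' α q'.2.2.1 q'.2.2.2
                + Kc φ x' α q'.2.2.2 * (Hc φ x' μ q'.1 q'.2.2.1 * Kc φ x' ν q'.2.1
                  + Kc φ x' μ q'.1 * Hc φ x' ν q'.2.1 q'.2.2.1)))
        * detJc φ ψ x' := by
  intro x' μ ν α
  have h := fiber_deriv hL hφ hg hrel hdensity x' 0 (Pi.single (μ, ν, α) 1) 0
  rw [transY_zero, transZ1_single_z1, transZ2_single_z1] at h
  have hexp := jet_expand (fderiv ℝ L (jet2 g' x'))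
    (fun p' => Kc φ x' μ p'.1 * Kc φ x' ν p'.2.1 * Kc φ x' α p'.2.2)
    (fun q' => (Hc φ x' μ q'.1 q'.2.2.2 * Kc φ x' ν q'.2.1 * Kc φ x' α q'.2.2.1
          + Kc φ x' μ q'.1 * Hc φ x' ν q'.2.1 q'.2.2.2 * Kc φ x' α q'.2.2.1
          + Kc φ x' μ q'.1 * Kc φ x' ν q'.2.1 * Hc φ x' α q'.2.2.1 q'.2.2.2)
        + Kc φ x' α q'.2.2.2 * (Hc φ x' μ q'.1 q'.2.2.1 * Kc φ x' ν q'.2.1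
          + Kc φ x' μ q'.1 * Hc φ x' ν q'.2.1 q'.2.2.1))
  rw [hexp] at h
  rw [← h]
  congr 1
  congr 1
  · exact Finset.sum_congr rfl fun p' _ => by ring
  · refine Finset.sum_congr rfl fun q' _ => ?_
    rw [mom4]; ring
end Keys

theorem sum_delta (f : Fin 4 → ℝ) (b : Fin 4) :
    ∑ γ', f γ' * (if γ' = b then 1 else 0) = f b := by
  simp [mul_ite]

theorem div_reduce (K M : Fin 4 → Fin 4 → ℝ) (Hh : Fin 4 → Fin 4 → Fin 4 → ℝ) (J : ℝ)
    (P : (Fin 4 × Fin 4 × Fin 4 × Fin 4) → ℝ)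
    (DP : Fin 4 → (Fin 4 × Fin 4 × Fin 4 × Fin 4) → ℝ) (DJ : Fin 4 → ℝ)
    (hMK : ∀ γ' α', ∑ β, M γ' β * K β α' = if γ' = α' then 1 else 0)
    (hH : ∀ a b c, Hh a b c = Hh a c b)
    (hDJ : ∀ i, DJ i = -(J * ∑ j, ∑ r, Hh j r i * M r j))
    (μ ν α : Fin 4) :
    ∑ β, ∑ γ', ((∑ q' : Fin 4 × Fin 4 × Fin 4 × Fin 4,
        (DP γ' q' * K μ q'.1 * K ν q'.2.1 * K α q'.2.2.1 * K β q'.2.2.2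
          + P q' * (Hh μ q'.1 γ' * K ν q'.2.1 * K α q'.2.2.1 * K β q'.2.2.2)
          + P q' * (K μ q'.1 * Hh ν q'.2.1 γ' * K α q'.2.2.1 * K β q'.2.2.2)
          + P q' * (K μ q'.1 * K ν q'.2.1 * Hh α q'.2.2.1 γ' * K β q'.2.2.2)
          + P q' * (K μ q'.1 * K ν q'.2.1 * K α q'.2.2.1 * Hh β q'.2.2.2 γ'))) * J
      + (∑ q' : Fin 4 × Fin 4 × Fin 4 × Fin 4,
          P q' * K μ q'.1 * K ν q'.2.1 * K α q'.2.2.1 * K β q'.2.2.2) * DJ γ') * M γ' β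
    = (∑ q' : Fin 4 × Fin 4 × Fin 4 × Fin 4,
        DP q'.2.2.2 q' * K μ q'.1 * K ν q'.2.1 * K α q'.2.2.1) * J
      + (∑ q' : Fin 4 × Fin 4 × Fin 4 × Fin 4,
          P q' * (Hh μ q'.1 q'.2.2.2 * K ν q'.2.1 * K α q'.2.2.1
            + K μ q'.1 * Hh ν q'.2.1 q'.2.2.2 * K α q'.2.2.1
            + K μ q'.1 * K ν q'.2.1 * Hh α q'.2.2.1 q'.2.2.2)) * J := by
  set c : (Fin 4 × Fin 4 × Fin 4 × Fin 4) → Fin 4 → Fin 4 → ℝ := fun q' γ' β =>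
    (J * (DP γ' q' * K μ q'.1 * K ν q'.2.1 * K α q'.2.2.1)
      + J * (P q' * (Hh μ q'.1 γ' * K ν q'.2.1 * K α q'.2.2.1
          + K μ q'.1 * Hh ν q'.2.1 γ' * K α q'.2.2.1
          + K μ q'.1 * K ν q'.2.1 * Hh α q'.2.2.1 γ'))
      + P q' * K μ q'.1 * K ν q'.2.1 * K α q'.2.2.1 * DJ γ') * (M γ' β * K β q'.2.2.2)
    + J * (P q' * K μ q'.1 * K ν q'.2.1 * K α q'.2.2.1) * (M γ' β * Hh β γ' q'.2.2.2)
    with hc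
  have step1 : ∀ β γ' : Fin 4, ((∑ q' : Fin 4 × Fin 4 × Fin 4 × Fin 4,
        (DP γ' q' * K μ q'.1 * K ν q'.2.1 * K α q'.2.2.1 * K β q'.2.2.2
          + P q' * (Hh μ q'.1 γ' * K ν q'.2.1 * K α q'.2.2.1 * K β q'.2.2.2)
          + P q' * (K μ q'.1 * Hh ν q'.2.1 γ' * K α q'.2.2.1 * K β q'.2.2.2)
          + P q' * (K μ q'.1 * K ν q'.2.1 * Hh α q'.2.2.1 γ' * K β q'.2.2.2)
          + P q' * (K μ q'.1 * K ν q'.2.1 * K α q'.2.2.1 * Hh β q'.2.2.2 γ'))) * J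
      + (∑ q' : Fin 4 × Fin 4 × Fin 4 × Fin 4,
          P q' * K μ q'.1 * K ν q'.2.1 * K α q'.2.2.1 * K β q'.2.2.2) * DJ γ') * M γ' β
      = ∑ q' : Fin 4 × Fin 4 × Fin 4 × Fin 4, c q' γ' β := by
    intro β γ'
    rw [add_mul, Finset.sum_mul, Finset.sum_mul, Finset.sum_mul, Finset.sum_mul,
      ← Finset.sum_add_distrib]
    refine Finset.sum_congr rfl fun q' _ => ?_
    rw [hc]
    simp only []
    rw [hH β q'.2.2.2 γ']
    ring
  have step2 : ∀ q' : Fin 4 × Fin 4 × Fin 4 × Fin 4, ∑ γ', ∑ β, c q' γ' β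
      = DP q'.2.2.2 q' * K μ q'.1 * K ν q'.2.1 * K α q'.2.2.1 * J
        + P q' * (Hh μ q'.1 q'.2.2.2 * K ν q'.2.1 * K α q'.2.2.1
            + K μ q'.1 * Hh ν q'.2.1 q'.2.2.2 * K α q'.2.2.1
            + K μ q'.1 * K ν q'.2.1 * Hh α q'.2.2.1 q'.2.2.2) * J := by
    intro q'
    have hβ : ∀ γ', ∑ β, c q' γ' β
        = (fun γ' => J * (DP γ' q' * K μ q'.1 * K ν q'.2.1 * K α q'.2.2.1)
            + J * (P q' * (Hh μ q'.1 γ' * K ν q'.2.1 * K α q'.2.2.1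
                + K μ q'.1 * Hh ν q'.2.1 γ' * K α q'.2.2.1
                + K μ q'.1 * K ν q'.2.1 * Hh α q'.2.2.1 γ'))
            + P q' * K μ q'.1 * K ν q'.2.1 * K α q'.2.2.1 * DJ γ') γ'
              * (if γ' = q'.2.2.2 then 1 else 0)
          + J * (P q' * K μ q'.1 * K ν q'.2.1 * K α q'.2.2.1)
              * ∑ β, M γ' β * Hh β γ' q'.2.2.2 := by
      intro γ'
      rw [hc]
      simp only []
      rw [Finset.sum_add_distrib, ← Finset.mul_sum, ← Finset.mul_sum, hMK γ' q'.2.2.2]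
    rw [Finset.sum_congr rfl fun γ' _ => hβ γ', Finset.sum_add_distrib, sum_delta,
      ← Finset.mul_sum]
    have hS : ∑ γ', ∑ β, M γ' β * Hh β γ' q'.2.2.2
        = ∑ j, ∑ r, Hh j r q'.2.2.2 * M r j := by
      rw [Finset.sum_comm]
      exact Finset.sum_congr rfl fun j _ => Finset.sum_congr rfl fun r _ => mul_comm _ _
    rw [hS, hDJ q'.2.2.2]
    ring
  rw [Finset.sum_congr rfl fun β (_ : β ∈ Finset.univ) =>
    Finset.sum_congr rfl fun γ' (_ : γ' ∈ Finset.univ) => step1 β γ']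
  rw [show (∑ β : Fin 4, ∑ γ' : Fin 4, ∑ q' : Fin 4 × Fin 4 × Fin 4 × Fin 4, c q' γ' β)
      = ∑ q' : Fin 4 × Fin 4 × Fin 4 × Fin 4, ∑ γ', ∑ β, c q' γ' β from
    calc (∑ β : Fin 4, ∑ γ' : Fin 4, ∑ q' : Fin 4 × Fin 4 × Fin 4 × Fin 4, c q' γ' β)
        = ∑ β : Fin 4, ∑ q' : Fin 4 × Fin 4 × Fin 4 × Fin 4, ∑ γ', c q' γ' β :=
          Finset.sum_congr rfl fun β _ => Finset.sum_comm
      _ = ∑ q' : Fin 4 × Fin 4 × Fin 4 × Fin 4, ∑ β, ∑ γ', c q' γ' β := Finset.sum_comm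
      _ = ∑ q' : Fin 4 × Fin 4 × Fin 4 × Fin 4, ∑ γ', ∑ β, c q' γ' β :=
          Finset.sum_congr rfl fun q' _ => Finset.sum_comm]
  rw [Finset.sum_congr rfl fun q' (_ : q' ∈ Finset.univ) => step2 q',
    Finset.sum_add_distrib, Finset.sum_mul, Finset.sum_mul]

theorem sum4_add (f g : Fin 4 → Fin 4 → Fin 4 → Fin 4 → ℝ) :
    ∑ a, ∑ b, ∑ c, ∑ d, (f a b c d + g a b c d)
      = (∑ a, ∑ b, ∑ c, ∑ d, f a b c d) + ∑ a, ∑ b, ∑ c, ∑ d, g a b c d := by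
  rw [← Finset.sum_add_distrib]
  exact Finset.sum_congr rfl fun a _ => sum3_add _ _

/-- For a diffeomorphism-invariant second-order Lagrangian density `L`, along any section
`g_{μν}(x)` the pulled-back first Ostrogradski momentum transforms under an
orientation-preserving coordinate change `x = φ(x')` as
`P^{μνα} = P^{μ'ν'α'} x^μ_{,μ'} x^ν_{,ν'} x^α_{,α'} det(x^{λ'}_{,λ})
 + (x^α_{,β'} x^μ_{,μ'α'} x^ν_{,ν'} + x^α_{,β'} x^μ_{,μ'} x^ν_{,ν'α'}) P^{μ'ν'α'β'} det(x^{λ'}_{,λ})`. -/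
theorem first_momentum_transformation
    (L : Jet2 → ℝ) (hL : ContDiff ℝ (⊤ : ℕ∞) L)
    (φ ψ : (Fin 4 → ℝ) → (Fin 4 → ℝ))
    (hφ : ContDiff ℝ (⊤ : ℕ∞) φ) (hψ : ContDiff ℝ (⊤ : ℕ∞) ψ)
    (hψφ : ∀ x', ψ (φ x') = x') (hφψ : ∀ x, φ (ψ x) = x)
    (horient : ∀ x', 0 < detJc φ ψ x')
    (g g' : (Fin 4 → ℝ) → (Fin 4 × Fin 4) → ℝ)
    (hg : ∀ p, ContDiff ℝ (⊤ : ℕ∞) fun x => g x p)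
    (hrel : ∀ x' p, g' x' p = ∑ μ, ∑ ν, g (φ x') (μ, ν) * Kc φ x' μ p.1 * Kc φ x' ν p.2)
    (hdensity : ∀ (x' : Fin 4 → ℝ) (y : (Fin 4 × Fin 4) → ℝ)
        (z1 : (Fin 4 × Fin 4 × Fin 4) → ℝ) (z2 : (Fin 4 × Fin 4 × Fin 4 × Fin 4) → ℝ),
        L (x', transY (Kc φ x') y, transZ1 (Kc φ x') (Hc φ x') y z1,
            transZ2 (Kc φ x') (Hc φ x') (Tc φ x') y z1 z2) * detJc φ ψ x'
          = L (φ x', y, z1, z2))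
    (x' : Fin 4 → ℝ) (μ ν α : Fin 4) :
    mom3 L g (φ x') μ ν α
      = (∑ μ', ∑ ν', ∑ α', mom3 L g' x' μ' ν' α'
            * Kc φ x' μ μ' * Kc φ x' ν ν' * Kc φ x' α α') * detJc φ ψ x'
        + (∑ μ', ∑ ν', ∑ α', ∑ β',
            (Kc φ x' α β' * Hc φ x' μ μ' α' * Kc φ x' ν ν'
              + Kc φ x' α β' * Kc φ x' μ μ' * Hc φ x' ν ν' α')
              * mom4 L g' x' (μ', ν', α', β')) * detJc φ ψ x' := by
  -- smoothness of the transformed section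
  have hg' : ∀ p, ContDiff ℝ (⊤ : ℕ∞) fun x => g' x p := by
    intro p
    have h : (fun t => g' t p)
        = fun t => ∑ μ₀, ∑ ν₀, g (φ t) (μ₀, ν₀) * Kc φ t μ₀ p.1 * Kc φ t ν₀ p.2 :=
      funext fun t => hrel t p
    rw [h]
    exact ContDiff.sum fun μ₀ _ => ContDiff.sum fun ν₀ _ =>
      (((hg (μ₀, ν₀)).comp hφ).mul (contDiff_K hφ μ₀ p.1)).mul (contDiff_K hφ ν₀ p.2)
  have dP4' : ∀ (q' : Fin 4 × Fin 4 × Fin 4 × Fin 4) (t : Fin 4 → ℝ),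
      DifferentiableAt ℝ (fun s => mom4 L g' s q') t :=
    fun q' t => ((contDiff_mom4 hL hg' q').differentiable (by simp)).differentiableAt
  have dK : ∀ (a b : Fin 4), DifferentiableAt ℝ (fun t => Kc φ t a b) x' :=
    fun a b => ((contDiff_K hφ a b).differentiable (by simp)).differentiableAt
  have dJ : DifferentiableAt ℝ (detJc φ ψ) x' := diffAt_detJc hφ hψ x'
  have dmom4g : ∀ q, DifferentiableAt ℝ (fun t => mom4 L g t q) (φ x') :=
    fun q => ((contDiff_mom4 hL hg q).differentiable (by simp)).differentiableAt
  -- Jacobi's formula combined with the differentiated inverse relation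
  have hDJ : ∀ i, pd i (detJc φ ψ) x'
      = -(detJc φ ψ x' * ∑ j, ∑ r, Hc φ x' j r i * Mc φ ψ x' r j) := by
    intro i
    have h1 : ∀ j : Fin 4, ∑ r, Kc φ x' j r * pd i (fun t => Mc φ ψ t r j) x'
        = -∑ r, Hc φ x' j r i * Mc φ ψ x' r j := fun j => dKM_id hφ hψ hψφ hφψ x' i j j
    rw [jacobi hφ hψ hψφ hφψ x' i,
      Finset.sum_congr rfl fun j (_ : j ∈ Finset.univ) => h1 j]
    rw [Finset.sum_neg_distrib]
    ring
  -- derivative of the transformed mom4 identity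
  have hinner : ∀ β γ' : Fin 4, pd γ' (fun t => mom4 L g (φ t) (μ, ν, α, β)) x'
      = (∑ q' : Fin 4 × Fin 4 × Fin 4 × Fin 4,
          (pd γ' (fun t => mom4 L g' t q') x' * Kc φ x' μ q'.1 * Kc φ x' ν q'.2.1
              * Kc φ x' α q'.2.2.1 * Kc φ x' β q'.2.2.2
            + mom4 L g' x' q' * (Hc φ x' μ q'.1 γ' * Kc φ x' ν q'.2.1
                * Kc φ x' α q'.2.2.1 * Kc φ x' β q'.2.2.2)
            + mom4 L g' x' q' * (Kc φ x' μ q'.1 * Hc φ x' ν q'.2.1 γ'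
                * Kc φ x' α q'.2.2.1 * Kc φ x' β q'.2.2.2)
            + mom4 L g' x' q' * (Kc φ x' μ q'.1 * Kc φ x' ν q'.2.1
                * Hc φ x' α q'.2.2.1 γ' * Kc φ x' β q'.2.2.2)
            + mom4 L g' x' q' * (Kc φ x' μ q'.1 * Kc φ x' ν q'.2.1
                * Kc φ x' α q'.2.2.1 * Hc φ x' β q'.2.2.2 γ'))) * detJc φ ψ x'
        + (∑ q' : Fin 4 × Fin 4 × Fin 4 × Fin 4,
            mom4 L g' x' q' * Kc φ x' μ q'.1 * Kc φ x' ν q'.2.1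
              * Kc φ x' α q'.2.2.1 * Kc φ x' β q'.2.2.2) * pd γ' (detJc φ ψ) x' := by
    intro β γ'
    have dS : DifferentiableAt ℝ (fun t => ∑ q' : Fin 4 × Fin 4 × Fin 4 × Fin 4,
        mom4 L g' t q' * Kc φ t μ q'.1 * Kc φ t ν q'.2.1
          * Kc φ t α q'.2.2.1 * Kc φ t β q'.2.2.2) x' :=
      DifferentiableAt.fun_sum fun q' _ =>
        ((((dP4' q' x').mul (dK μ q'.1)).mul (dK ν q'.2.1)).mul (dK α q'.2.2.1)).mul
          (dK β q'.2.2.2)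
    rw [pd_congr (fun t => key4 hL hφ hg hrel hdensity t (μ, ν, α, β)) γ' x',
      pd_mul dS dJ]
    congr 1
    congr 1
    rw [pd_sum (fun q' _ =>
      ((((dP4' q' x').fun_mul (dK μ q'.1)).fun_mul (dK ν q'.2.1)).fun_mul (dK α q'.2.2.1)).fun_mul
        (dK β q'.2.2.2)) γ']
    refine Finset.sum_congr rfl fun q' _ => ?_
    rw [pd_mul5 (dP4' q' x') (dK μ q'.1) (dK ν q'.2.1) (dK α q'.2.2.1) (dK β q'.2.2.2)]
    have eK : ∀ a b : Fin 4, pd γ' (fun t => Kc φ t a b) x' = Hc φ x' a b γ' := fun a b => rfl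
    rw [eK, eK, eK, eK]
    ring
  -- divergence term
  have hdivergence : ∑ β, pd β (fun t => mom4 L g t (μ, ν, α, β)) (φ x')
      = (∑ q' : Fin 4 × Fin 4 × Fin 4 × Fin 4,
          pd q'.2.2.2 (fun t => mom4 L g' t q') x' * Kc φ x' μ q'.1 * Kc φ x' ν q'.2.1
            * Kc φ x' α q'.2.2.1) * detJc φ ψ x'
        + (∑ q' : Fin 4 × Fin 4 × Fin 4 × Fin 4,
            mom4 L g' x' q' * (Hc φ x' μ q'.1 q'.2.2.2 * Kc φ x' ν q'.2.1 * Kc φ x' α q'.2.2.1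
              + Kc φ x' μ q'.1 * Hc φ x' ν q'.2.1 q'.2.2.2 * Kc φ x' α q'.2.2.1
              + Kc φ x' μ q'.1 * Kc φ x' ν q'.2.1 * Hc φ x' α q'.2.2.1 q'.2.2.2))
          * detJc φ ψ x' := by
    have h1 : ∀ β : Fin 4, pd β (fun t => mom4 L g t (μ, ν, α, β)) (φ x')
        = ∑ γ', pd γ' (fun t => mom4 L g (φ t) (μ, ν, α, β)) x' * Mc φ ψ x' γ' β :=
      fun β => pd_transport hφ hψ hψφ hφψ (dmom4g (μ, ν, α, β)) β
    rw [Finset.sum_congr rfl fun β (_ : β ∈ Finset.univ) => h1 β]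
    rw [Finset.sum_congr rfl fun β (_ : β ∈ Finset.univ) =>
      Finset.sum_congr rfl fun γ' (_ : γ' ∈ Finset.univ) =>
        congrArg (fun z => z * Mc φ ψ x' γ' β) (hinner β γ')]
    exact div_reduce (Kc φ x') (Mc φ ψ x') (fun a b c => Hc φ x' a b c) (detJc φ ψ x')
      (fun q' => mom4 L g' x' q') (fun γ' q' => pd γ' (fun t => mom4 L g' t q') x')
      (fun i => pd i (detJc φ ψ) x') (MK_id hφ hψ hψφ x') (Hc_symm hφ x') hDJ μ ν α
  -- assemble
  have hm3 : mom3 L g (φ x') μ ν α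
      = fderiv ℝ L (jet2 g (φ x')) (0, 0, Pi.single (μ, ν, α) 1, 0)
        - ∑ β, pd β (fun t => mom4 L g t (μ, ν, α, β)) (φ x') := rfl
  rw [hm3, key3 hL hφ hg hrel hdensity x' μ ν α, hdivergence]
  -- pass from product-type sums to nested sums and conclude
  have sum_unprod3 : ∀ f : Fin 4 → Fin 4 → Fin 4 → ℝ,
      (∑ p' : Fin 4 × Fin 4 × Fin 4, f p'.1 p'.2.1 p'.2.2) = ∑ a, ∑ b, ∑ c, f a b c := by
    intro f
    calc (∑ p' : Fin 4 × Fin 4 × Fin 4, f p'.1 p'.2.1 p'.2.2)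
        = ∑ a, ∑ r : Fin 4 × Fin 4, f a r.1 r.2 :=
          Fintype.sum_prod_type (f := fun p' : Fin 4 × Fin 4 × Fin 4 => f p'.1 p'.2.1 p'.2.2)
      _ = ∑ a, ∑ b, ∑ c, f a b c := Finset.sum_congr rfl fun a _ =>
          Fintype.sum_prod_type (f := fun r : Fin 4 × Fin 4 => f a r.1 r.2)
  have sum_unprod4 : ∀ f : Fin 4 → Fin 4 → Fin 4 → Fin 4 → ℝ,
      (∑ q' : Fin 4 × Fin 4 × Fin 4 × Fin 4, f q'.1 q'.2.1 q'.2.2.1 q'.2.2.2)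
        = ∑ a, ∑ b, ∑ c, ∑ d, f a b c d := by
    intro f
    calc (∑ q' : Fin 4 × Fin 4 × Fin 4 × Fin 4, f q'.1 q'.2.1 q'.2.2.1 q'.2.2.2)
        = ∑ a, ∑ r : Fin 4 × Fin 4 × Fin 4, f a r.1 r.2.1 r.2.2 :=
          Fintype.sum_prod_type
            (f := fun q' : Fin 4 × Fin 4 × Fin 4 × Fin 4 => f q'.1 q'.2.1 q'.2.2.1 q'.2.2.2)
      _ = ∑ a, ∑ b, ∑ c, ∑ d, f a b c d :=
          Finset.sum_congr rfl fun a _ => sum_unprod3 (f a)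
  have eD1 : (∑ p' : Fin 4 × Fin 4 × Fin 4,
        fderiv ℝ L (jet2 g' x') (0, 0, Pi.single p' 1, 0)
          * Kc φ x' μ p'.1 * Kc φ x' ν p'.2.1 * Kc φ x' α p'.2.2)
      = ∑ a, ∑ b, ∑ c, fderiv ℝ L (jet2 g' x') (0, 0, Pi.single (a, b, c) 1, 0)
          * Kc φ x' μ a * Kc φ x' ν b * Kc φ x' α c :=
    sum_unprod3 (fun a b c => fderiv ℝ L (jet2 g' x') (0, 0, Pi.single (a, b, c) 1, 0)
      * Kc φ x' μ a * Kc φ x' ν b * Kc φ x' α c)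
  have eBig : (∑ q' : Fin 4 × Fin 4 × Fin 4 × Fin 4, mom4 L g' x' q' *
        (Hc φ x' μ q'.1 q'.2.2.2 * Kc φ x' ν q'.2.1 * Kc φ x' α q'.2.2.1
          + Kc φ x' μ q'.1 * Hc φ x' ν q'.2.1 q'.2.2.2 * Kc φ x' α q'.2.2.1
          + Kc φ x' μ q'.1 * Kc φ x' ν q'.2.1 * Hc φ x' α q'.2.2.1 q'.2.2.2
          + Kc φ x' α q'.2.2.2 * (Hc φ x' μ q'.1 q'.2.2.1 * Kc φ x' ν q'.2.1
            + Kc φ x' μ q'.1 * Hc φ x' ν q'.2.1 q'.2.2.1)))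
      = (∑ a, ∑ b, ∑ c, ∑ d, mom4 L g' x' (a, b, c, d) *
          (Hc φ x' μ a d * Kc φ x' ν b * Kc φ x' α c
            + Kc φ x' μ a * Hc φ x' ν b d * Kc φ x' α c
            + Kc φ x' μ a * Kc φ x' ν b * Hc φ x' α c d))
        + ∑ a, ∑ b, ∑ c, ∑ d, mom4 L g' x' (a, b, c, d) *
            (Kc φ x' α d * (Hc φ x' μ a c * Kc φ x' ν b
              + Kc φ x' μ a * Hc φ x' ν b c)) := by
    rw [sum_unprod4 (fun a b c d => mom4 L g' x' (a, b, c, d) *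
        (Hc φ x' μ a d * Kc φ x' ν b * Kc φ x' α c
          + Kc φ x' μ a * Hc φ x' ν b d * Kc φ x' α c
          + Kc φ x' μ a * Kc φ x' ν b * Hc φ x' α c d
          + Kc φ x' α d * (Hc φ x' μ a c * Kc φ x' ν b
            + Kc φ x' μ a * Hc φ x' ν b c)))]
    rw [← sum4_add]
    exact Finset.sum_congr rfl fun a _ => Finset.sum_congr rfl fun b _ =>
      Finset.sum_congr rfl fun c _ => Finset.sum_congr rfl fun d _ => by ring
  have eDP : (∑ q' : Fin 4 × Fin 4 × Fin 4 × Fin 4,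
        pd q'.2.2.2 (fun t => mom4 L g' t q') x' * Kc φ x' μ q'.1 * Kc φ x' ν q'.2.1
          * Kc φ x' α q'.2.2.1)
      = ∑ a, ∑ b, ∑ c, ∑ d, pd d (fun t => mom4 L g' t (a, b, c, d)) x'
          * Kc φ x' μ a * Kc φ x' ν b * Kc φ x' α c :=
    sum_unprod4 (fun a b c d => pd d (fun t => mom4 L g' t (a, b, c, d)) x'
      * Kc φ x' μ a * Kc φ x' ν b * Kc φ x' α c)
  have eH3 : (∑ q' : Fin 4 × Fin 4 × Fin 4 × Fin 4, mom4 L g' x' q' *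
        (Hc φ x' μ q'.1 q'.2.2.2 * Kc φ x' ν q'.2.1 * Kc φ x' α q'.2.2.1
          + Kc φ x' μ q'.1 * Hc φ x' ν q'.2.1 q'.2.2.2 * Kc φ x' α q'.2.2.1
          + Kc φ x' μ q'.1 * Kc φ x' ν q'.2.1 * Hc φ x' α q'.2.2.1 q'.2.2.2))
      = ∑ a, ∑ b, ∑ c, ∑ d, mom4 L g' x' (a, b, c, d) *
          (Hc φ x' μ a d * Kc φ x' ν b * Kc φ x' α c
            + Kc φ x' μ a * Hc φ x' ν b d * Kc φ x' α c
            + Kc φ x' μ a * Kc φ x' ν b * Hc φ x' α c d) :=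
    sum_unprod4 (fun a b c d => mom4 L g' x' (a, b, c, d) *
      (Hc φ x' μ a d * Kc φ x' ν b * Kc φ x' α c
        + Kc φ x' μ a * Hc φ x' ν b d * Kc φ x' α c
        + Kc φ x' μ a * Kc φ x' ν b * Hc φ x' α c d))
  have emom3 : (∑ μ', ∑ ν', ∑ α', mom3 L g' x' μ' ν' α'
        * Kc φ x' μ μ' * Kc φ x' ν ν' * Kc φ x' α α')
      = (∑ a, ∑ b, ∑ c, fderiv ℝ L (jet2 g' x') (0, 0, Pi.single (a, b, c) 1, 0)
          * Kc φ x' μ a * Kc φ x' ν b * Kc φ x' α c)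
        + (-1) * ∑ a, ∑ b, ∑ c, ∑ d, pd d (fun t => mom4 L g' t (a, b, c, d)) x'
            * Kc φ x' μ a * Kc φ x' ν b * Kc φ x' α c := by
    rw [show (∑ μ', ∑ ν', ∑ α', mom3 L g' x' μ' ν' α'
          * Kc φ x' μ μ' * Kc φ x' ν ν' * Kc φ x' α α')
        = ∑ a, ∑ b, ∑ c,
            ((fderiv ℝ L (jet2 g' x') (0, 0, Pi.single (a, b, c) 1, 0)
              * Kc φ x' μ a * Kc φ x' ν b * Kc φ x' α c)
            + (-1) * ∑ d, pd d (fun t => mom4 L g' t (a, b, c, d)) x'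
                * Kc φ x' μ a * Kc φ x' ν b * Kc φ x' α c) from ?_]
    · rw [sum3_split]
    · refine Finset.sum_congr rfl fun a _ => Finset.sum_congr rfl fun b _ =>
        Finset.sum_congr rfl fun c _ => ?_
      have hm : mom3 L g' x' a b c
          = fderiv ℝ L (jet2 g' x') (0, 0, Pi.single (a, b, c) 1, 0)
            - ∑ d, pd d (fun t => mom4 L g' t (a, b, c, d)) x' := rfl
      have hs : (∑ d, pd d (fun t => mom4 L g' t (a, b, c, d)) x')
            * Kc φ x' μ a * Kc φ x' ν b * Kc φ x' α c
          = ∑ d, pd d (fun t => mom4 L g' t (a, b, c, d)) x'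
            * Kc φ x' μ a * Kc φ x' ν b * Kc φ x' α c := by
        rw [Finset.sum_mul, Finset.sum_mul, Finset.sum_mul]
      rw [hm, sub_mul, sub_mul, sub_mul, hs]
      ring
  have ecoeff : (∑ μ', ∑ ν', ∑ α', ∑ β',
        (Kc φ x' α β' * Hc φ x' μ μ' α' * Kc φ x' ν ν'
          + Kc φ x' α β' * Kc φ x' μ μ' * Hc φ x' ν ν' α')
          * mom4 L g' x' (μ', ν', α', β'))
      = ∑ a, ∑ b, ∑ c, ∑ d, mom4 L g' x' (a, b, c, d) *
          (Kc φ x' α d * (Hc φ x' μ a c * Kc φ x' ν b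
            + Kc φ x' μ a * Hc φ x' ν b c)) :=
    Finset.sum_congr rfl fun a _ => Finset.sum_congr rfl fun b _ =>
      Finset.sum_congr rfl fun c _ => Finset.sum_congr rfl fun d _ => by ring
  rw [eD1, eBig, eDP, eH3, emom3, ecoeff]
  ring
end

section
/- The first Ostrogradski momentum of the Hilbert Lagrangian is P^{μνα} = ∂L/∂g_{μν,α} − ∂_β P^{μναβ} = (1/2)( −g^{μα}Γ^ν − g^{να}Γ^μ + Γ^{νμα} + Γ^{μνα} )√(−det g). -/
set_option maxHeartbeats 1000000


/-- The fiber coordinates `(g_{μν}, g_{μν,α}, g_{μν,αβ})` on which the second-order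
Hilbert Lagrangian depends. -/
abbrev HJet : Type :=
  ((Fin 4 × Fin 4) → ℝ) × ((Fin 4 × Fin 4 × Fin 4) → ℝ) × ((Fin 4 × Fin 4 × Fin 4 × Fin 4) → ℝ)

/-- The metric as a matrix. -/
noncomputable def metr (y : (Fin 4 × Fin 4) → ℝ) : Matrix (Fin 4) (Fin 4) ℝ :=
  Matrix.of fun μ ν => y (μ, ν)

/-- The inverse metric `g^{μν}`. -/
noncomputable def ginv (y : (Fin 4 × Fin 4) → ℝ) : Matrix (Fin 4) (Fin 4) ℝ := (metr y)⁻¹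

/-- The Christoffel symbol of the first kind as a function of `z1 (μ,ν,α) = g_{μν,α}`. -/
noncomputable def Gamma1 (z1 : (Fin 4 × Fin 4 × Fin 4) → ℝ) (lam μ ν : Fin 4) : ℝ :=
  (1 / 2) * (z1 (μ, lam, ν) + z1 (ν, lam, μ) - z1 (μ, ν, lam))

/-- `R₁ = Γ_{μνλ} Γ_{αβγ} (−g^{μα} g^{νλ} g^{βγ} + g^{μα} g^{νγ} g^{λβ})`. -/
noncomputable def R1fun (y : (Fin 4 × Fin 4) → ℝ) (z1 : (Fin 4 × Fin 4 × Fin 4) → ℝ) : ℝ :=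
  ∑ μ, ∑ ν, ∑ lam, ∑ α, ∑ β, ∑ γ, Gamma1 z1 μ ν lam * Gamma1 z1 α β γ *
    (-(ginv y μ α * ginv y ν lam * ginv y β γ) + ginv y μ α * ginv y ν γ * ginv y lam β)

/-- `R₂ = (1/2) g_{μν,αβ} (g^{μα} g^{νβ} + g^{μβ} g^{να} − 2 g^{μν} g^{αβ})`. -/
noncomputable def R2fun (y : (Fin 4 × Fin 4) → ℝ)
    (z2 : (Fin 4 × Fin 4 × Fin 4 × Fin 4) → ℝ) : ℝ :=
  (1 / 2) * ∑ μ, ∑ ν, ∑ α, ∑ β, z2 (μ, ν, α, β) *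
    (ginv y μ α * ginv y ν β + ginv y μ β * ginv y ν α - 2 * ginv y μ ν * ginv y α β)

/-- The Hilbert Lagrangian `L = R √(−det g) = (R₁ + R₂) √(−det g)`. -/
noncomputable def HilbertL (w : HJet) : ℝ :=
  (R1fun w.1 w.2.1 + R2fun w.1 w.2.2) * Real.sqrt (-(metr w.1).det)

/-- The fiber part of the second jet of a section `g_{μν}(x)`. -/
noncomputable def jetH (g : (Fin 4 → ℝ) → (Fin 4 × Fin 4) → ℝ) (x : Fin 4 → ℝ) : HJet :=
  (g x, fun p => pd p.2.2 (fun t => g t (p.1, p.2.1)) x,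
    fun q => pd q.2.2.2 (fun t => pd q.2.2.1 (fun s => g s (q.1, q.2.1)) t) x)

/-- The second Ostrogradski momentum `P^{μναβ} = ∂L/∂g_{μν,αβ}` along a section. -/
noncomputable def P4H (g : (Fin 4 → ℝ) → (Fin 4 × Fin 4) → ℝ) (x : Fin 4 → ℝ)
    (μ ν α β : Fin 4) : ℝ :=
  fderiv ℝ HilbertL (jetH g x) (0, 0, Pi.single (μ, ν, α, β) 1)

/-- The symmetrized partial derivative `∂L/∂g_{μν,α}` (respecting the symmetry in `(μ,ν)`)
along a section. -/
noncomputable def dL1H (g : (Fin 4 → ℝ) → (Fin 4 × Fin 4) → ℝ) (x : Fin 4 → ℝ)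
    (μ ν α : Fin 4) : ℝ :=
  fderiv ℝ HilbertL (jetH g x)
    (0, (1 / 2 : ℝ) • (Pi.single (μ, ν, α) (1 : ℝ) + Pi.single (ν, μ, α) (1 : ℝ)), 0)


section Helpers


variable {E : Type*} [NormedAddCommGroup E] [NormedSpace ℝ E]

theorem hasDerivAt_line (f : E → ℝ) (p w : E) (hf : DifferentiableAt ℝ f p) :
    HasDerivAt (fun t : ℝ => f (p + t • w)) (fderiv ℝ f p w) 0 := by
  have hline : HasDerivAt (fun t : ℝ => p + t • w) w 0 := by
    simpa using ((hasDerivAt_id (0:ℝ)).smul_const w).const_add p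
  have hf' : HasFDerivAt f (fderiv ℝ f p) (p + (0:ℝ) • w) := by
    simpa using hf.hasFDerivAt
  exact hf'.comp_hasDerivAt (0:ℝ) hline

theorem fderiv_line (f : E → ℝ) (p w : E) (hf : DifferentiableAt ℝ f p) :
    fderiv ℝ f p w = deriv (fun t : ℝ => f (p + t • w)) 0 :=
  (hasDerivAt_line f p w hf).deriv.symm


open Finset in
theorem differentiableAt_det4 {E : Type*} [NormedAddCommGroup E] [NormedSpace ℝ E]
    {M : E → Matrix (Fin 4) (Fin 4) ℝ} {x : E}
    (h : ∀ i j, DifferentiableAt ℝ (fun e => M e i j) x) :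
    DifferentiableAt ℝ (fun e => (M e).det) x := by
  simp only [Matrix.det_apply, Units.smul_def, zsmul_eq_mul]
  apply DifferentiableAt.fun_sum
  intro σ _
  apply DifferentiableAt.const_mul
  simp only [Fin.prod_univ_four]
  exact (((h _ _).mul (h _ _)).mul (h _ _)).mul (h _ _)

open Finset in
theorem hasDerivAt_det4 {M : ℝ → Matrix (Fin 4) (Fin 4) ℝ} {A' : Matrix (Fin 4) (Fin 4) ℝ}
    {t₀ : ℝ} (h : ∀ i j, HasDerivAt (fun t => M t i j) (A' i j) t₀) :
    HasDerivAt (fun t => (M t).det)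
      (∑ i, ∑ k, A' i k * (M t₀).adjugate k i) t₀ := by
  have step1 : HasDerivAt (fun t => (M t).det)
      (∑ σ : Equiv.Perm (Fin 4), ((Equiv.Perm.sign σ : ℤ) : ℝ) *
        ∑ i, (∏ j ∈ univ.erase i, M t₀ (σ j) j) * A' (σ i) i) t₀ := by
    simp only [Matrix.det_apply, Units.smul_def, zsmul_eq_mul]
    apply HasDerivAt.fun_sum
    intro σ _
    have := (HasDerivAt.finset_prod (u := univ) (f := fun i t => M t (σ i) i)
      (f' := fun i => A' (σ i) i) (fun i _ => h (σ i) i)).const_mul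
      (((Equiv.Perm.sign σ : ℤ) : ℝ))
    simpa [smul_eq_mul] using this
  convert step1 using 1
  -- algebra: ∑ i ∑ k A' i k * adj k i = ∑ σ ε ∑ i (∏ erase) * A' (σ i) i
  have adj_eq : ∀ i k : Fin 4, (M t₀).adjugate k i =
      ∑ σ : Equiv.Perm (Fin 4), ((Equiv.Perm.sign σ : ℤ) : ℝ) *
        ((Pi.single k (1:ℝ) : Fin 4 → ℝ) (σ⁻¹ i) * ∏ j ∈ univ.erase (σ⁻¹ i), M t₀ (σ j) j) := by
    intro i k
    rw [Matrix.adjugate_apply, Matrix.det_apply]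
    refine Finset.sum_congr rfl fun σ _ => ?_
    rw [Units.smul_def, zsmul_eq_mul]
    congr 1
    rw [← Finset.mul_prod_erase _ _ (Finset.mem_univ (σ⁻¹ i))]
    congr 1
    · simp [Matrix.updateRow_apply]
    · refine Finset.prod_congr rfl fun j hj => ?_
      have hj' : j ≠ σ⁻¹ i := (Finset.mem_erase.mp hj).1
      have : σ j ≠ i := by
        intro hc; exact hj' (by simpa [Equiv.symm_apply_eq] using hc.symm ▸ (σ.symm_apply_apply j).symm)
      simp [Matrix.updateRow_apply, this]
  calc ∑ i, ∑ k, A' i k * (M t₀).adjugate k i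
      = ∑ i, ∑ σ : Equiv.Perm (Fin 4), ((Equiv.Perm.sign σ : ℤ) : ℝ) *
          (A' i (σ⁻¹ i) * ∏ j ∈ univ.erase (σ⁻¹ i), M t₀ (σ j) j) := by
        refine Finset.sum_congr rfl fun i _ => ?_
        simp only [adj_eq, Finset.mul_sum]
        rw [Finset.sum_comm]
        refine Finset.sum_congr rfl fun σ _ => ?_
        rw [Finset.sum_eq_single (σ⁻¹ i)]
        · simp [Pi.single_apply]; ring
        · intro k _ hk
          have hk' : σ.symm i ≠ k := fun h => hk h.symm
          simp [Pi.single_apply, Ne.symm hk, hk']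
        · simp
    _ = ∑ σ : Equiv.Perm (Fin 4), ((Equiv.Perm.sign σ : ℤ) : ℝ) *
          ∑ i, (∏ j ∈ univ.erase i, M t₀ (σ j) j) * A' (σ i) i := by
        rw [Finset.sum_comm]
        refine Finset.sum_congr rfl fun σ _ => ?_
        rw [Finset.mul_sum]
        rw [← Equiv.sum_comp σ⁻¹ (fun i => ((Equiv.Perm.sign σ : ℤ) : ℝ) *
          ((∏ j ∈ univ.erase i, M t₀ (σ j) j) * A' (σ i) i))]
        refine Finset.sum_congr rfl fun i _ => ?_
        simp only [Equiv.Perm.inv_def, Equiv.apply_symm_apply]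
        ring


abbrev F3 : Type := Fin 4 × Fin 4 × Fin 4

lemma nest3 (F : F3 → ℝ) : (∑ a, ∑ b, ∑ c, F (a, b, c)) = ∑ p, F p := by
  rw [Fintype.sum_prod_type]
  exact Finset.sum_congr rfl fun a _ =>
    (Fintype.sum_prod_type (f := fun y : Fin 4 × Fin 4 => F (a, y))).symm

lemma sum3_delta (q : F3) (F : F3 → ℝ) :
    (∑ p, (Pi.single q (1:ℝ) : F3 → ℝ) p * F p) = F q := by
  rw [Finset.sum_eq_single q]
  · simp
  · intro p _ hp; simp [Pi.single_apply, hp]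
  · simp

lemma sum3_reindex (e : F3 ≃ F3) (F : F3 → ℝ) : ∑ p, F p = ∑ p, F (e p) :=
  (Equiv.sum_comp e F).symm

lemma sum3_delta_comp (e : F3 ≃ F3) (q : F3) (F : F3 → ℝ) :
    (∑ p, (Pi.single q (1:ℝ) : F3 → ℝ) (e p) * F p) = F (e.symm q) := by
  rw [Finset.sum_eq_single (e.symm q)]
  · rw [e.apply_symm_apply]; simp
  · intro p _ hp
    have h2 : e p ≠ q := fun hc => hp (by rw [← hc, Equiv.symm_apply_apply])
    simp [Pi.single_apply, h2]
  · simp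

def e213 : F3 ≃ F3 := ⟨fun p => (p.2.1, p.1, p.2.2), fun p => (p.2.1, p.1, p.2.2),
  by rintro ⟨a,b,c⟩; rfl, by rintro ⟨a,b,c⟩; rfl⟩
def e231 : F3 ≃ F3 := ⟨fun p => (p.2.1, p.2.2, p.1), fun p => (p.2.2, p.1, p.2.1),
  by rintro ⟨a,b,c⟩; rfl, by rintro ⟨a,b,c⟩; rfl⟩
def e312 : F3 ≃ F3 := ⟨fun p => (p.2.2, p.1, p.2.1), fun p => (p.2.1, p.2.2, p.1),
  by rintro ⟨a,b,c⟩; rfl, by rintro ⟨a,b,c⟩; rfl⟩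
def e132 : F3 ≃ F3 := ⟨fun p => (p.1, p.2.2, p.2.1), fun p => (p.1, p.2.2, p.2.1),
  by rintro ⟨a,b,c⟩; rfl, by rintro ⟨a,b,c⟩; rfl⟩
def e321 : F3 ≃ F3 := ⟨fun p => (p.2.2, p.2.1, p.1), fun p => (p.2.2, p.2.1, p.1),
  by rintro ⟨a,b,c⟩; rfl, by rintro ⟨a,b,c⟩; rfl⟩

lemma sum3_perm (e : F3 ≃ F3) (F : Fin 4 → Fin 4 → Fin 4 → ℝ) :
    (∑ a, ∑ b, ∑ c, F a b c)
      = ∑ a, ∑ b, ∑ c, F (e (a,b,c)).1 (e (a,b,c)).2.1 (e (a,b,c)).2.2 :=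
  ((nest3 fun p => F p.1 p.2.1 p.2.2).trans
    (sum3_reindex e fun p => F p.1 p.2.1 p.2.2)).trans
    (nest3 fun p => F (e p).1 (e p).2.1 (e p).2.2).symm

-- collapses: ∑ a b c, δ_q(e(a,b,c)) * F a b c = F at e.symm q
lemma collapse3_gen (e : F3 ≃ F3) (q : F3) (F : Fin 4 → Fin 4 → Fin 4 → ℝ) :
    (∑ a, ∑ b, ∑ c, (Pi.single q (1:ℝ) : F3 → ℝ) (e (a,b,c)) * F a b c)
      = F (e.symm q).1 (e.symm q).2.1 (e.symm q).2.2 :=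
  (nest3 fun p => (Pi.single q (1:ℝ) : F3 → ℝ) (e p) * F p.1 p.2.1 p.2.2).trans
    (sum3_delta_comp e q fun p => F p.1 p.2.1 p.2.2)

lemma collapse3_213 (q : F3) (F : Fin 4 → Fin 4 → Fin 4 → ℝ) :
    (∑ a, ∑ b, ∑ c, (Pi.single q (1:ℝ) : F3 → ℝ) (b,a,c) * F a b c)
      = F q.2.1 q.1 q.2.2 := collapse3_gen e213 q F

lemma collapse3_312 (q : F3) (F : Fin 4 → Fin 4 → Fin 4 → ℝ) :
    (∑ a, ∑ b, ∑ c, (Pi.single q (1:ℝ) : F3 → ℝ) (c,a,b) * F a b c)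
      = F q.2.1 q.2.2 q.1 := collapse3_gen e312 q F

lemma collapse3_231 (q : F3) (F : Fin 4 → Fin 4 → Fin 4 → ℝ) :
    (∑ a, ∑ b, ∑ c, (Pi.single q (1:ℝ) : F3 → ℝ) (b,c,a) * F a b c)
      = F q.2.2 q.1 q.2.1 := collapse3_gen e231 q F

end Helpers
section Pointwise

variable {g : (Fin 4 → ℝ) → (Fin 4 × Fin 4) → ℝ}

lemma metr_apply (y : (Fin 4 × Fin 4) → ℝ) (a b : Fin 4) : metr y a b = y (a, b) := rfl

lemma entry_diff (hsmooth : ∀ p, ContDiff ℝ (⊤ : ℕ∞) fun x => g x p) (p : Fin 4 × Fin 4)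
    (x : Fin 4 → ℝ) : DifferentiableAt ℝ (fun t => g t p) x :=
  ((hsmooth p).differentiable (by simp)).differentiableAt

/-- first derivatives of the metric components -/
noncomputable def zf (g : (Fin 4 → ℝ) → (Fin 4 × Fin 4) → ℝ) (x : Fin 4 → ℝ)
    (a b c : Fin 4) : ℝ := pd c (fun t => g t (a, b)) x

lemma jet_z (x : Fin 4 → ℝ) (p : Fin 4 × Fin 4 × Fin 4) :
    (jetH g x).2.1 p = zf g x p.1 p.2.1 p.2.2 := rfl

lemma entry_curve (hsmooth : ∀ p, ContDiff ℝ (⊤ : ℕ∞) fun x => g x p) (x : Fin 4 → ℝ)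
    (β a b : Fin 4) :
    HasDerivAt (fun s : ℝ => g (x + s • (Pi.single β 1 : Fin 4 → ℝ)) (a, b)) (zf g x a b β) 0 :=
  hasDerivAt_line (fun t => g t (a, b)) x (Pi.single β 1 : Fin 4 → ℝ) (entry_diff hsmooth _ x)

lemma ginv_apply (y : (Fin 4 × Fin 4) → ℝ) (i j : Fin 4) :
    ginv y i j = ((metr y).det)⁻¹ * (metr y).adjugate i j := by
  rw [ginv, Matrix.inv_def]
  rw [Matrix.smul_apply, Ring.inverse_eq_inv', smul_eq_mul]

lemma adj_diff {E' : Type*} [NormedAddCommGroup E'] [NormedSpace ℝ E']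
    {M : E' → Matrix (Fin 4) (Fin 4) ℝ} {x : E'}
    (h : ∀ i j, DifferentiableAt ℝ (fun e => M e i j) x) (i j : Fin 4) :
    DifferentiableAt ℝ (fun e => (M e).adjugate i j) x := by
  simp only [Matrix.adjugate_apply]
  apply differentiableAt_det4
  intro a b
  rcases eq_or_ne a j with rfl|hne
  · simp only [Matrix.updateRow_apply, if_pos rfl]
    exact differentiableAt_const _
  · simp only [Matrix.updateRow_apply, if_neg hne]
    exact h a b

lemma ginv_diff_gen {E' : Type*} [NormedAddCommGroup E'] [NormedSpace ℝ E']
    {Y : E' → (Fin 4 × Fin 4) → ℝ} {x : E'}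
    (h : ∀ p, DifferentiableAt ℝ (fun e => Y e p) x)
    (hd : (metr (Y x)).det ≠ 0) (i j : Fin 4) :
    DifferentiableAt ℝ (fun e => ginv (Y e) i j) x := by
  have hM : ∀ a b, DifferentiableAt ℝ (fun e => metr (Y e) a b) x := fun a b => h (a, b)
  have hdet' := differentiableAt_det4 (M := fun e => metr (Y e)) hM
  have hadj := adj_diff (M := fun e => metr (Y e)) hM i j
  simp only [ginv_apply]
  exact (hdet'.inv hd).mul hadj

lemma sqrt_diff_gen {E' : Type*} [NormedAddCommGroup E'] [NormedSpace ℝ E']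
    {Y : E' → (Fin 4 × Fin 4) → ℝ} {x : E'}
    (h : ∀ p, DifferentiableAt ℝ (fun e => Y e p) x)
    (hd : (metr (Y x)).det ≠ 0) :
    DifferentiableAt ℝ (fun e => Real.sqrt (-(metr (Y e)).det)) x := by
  have hM : ∀ a b, DifferentiableAt ℝ (fun e => metr (Y e) a b) x := fun a b => h (a, b)
  have hdet' := (differentiableAt_det4 (M := fun e => metr (Y e)) hM).neg
  exact (Real.hasDerivAt_sqrt (by simpa using hd)).differentiableAt.comp x hdet'

lemma mul_inv_entry (hdet : ∀ x, (metr (g x)).det < 0) (t : Fin 4 → ℝ) (i j : Fin 4) :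
    (∑ k, metr (g t) i k * ginv (g t) k j) = if i = j then (1:ℝ) else 0 := by
  have h := Matrix.mul_nonsing_inv (metr (g t)) (isUnit_iff_ne_zero.mpr (hdet t).ne)
  have h2 := congrFun (congrFun h i) j
  simpa [Matrix.mul_apply, Matrix.one_apply, ginv] using h2

lemma inv_mul_entry (hdet : ∀ x, (metr (g x)).det < 0) (t : Fin 4 → ℝ) (i j : Fin 4) :
    (∑ k, ginv (g t) i k * metr (g t) k j) = if i = j then (1:ℝ) else 0 := by
  have h := Matrix.nonsing_inv_mul (metr (g t)) (isUnit_iff_ne_zero.mpr (hdet t).ne)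
  have h2 := congrFun (congrFun h i) j
  simpa [Matrix.mul_apply, Matrix.one_apply, ginv] using h2

lemma ginv_symm (hsym : ∀ x μ ν, g x (μ, ν) = g x (ν, μ)) (t : Fin 4 → ℝ) (i j : Fin 4) :
    ginv (g t) i j = ginv (g t) j i := by
  have h1 : (metr (g t)).transpose = metr (g t) := by
    ext a b; simp [Matrix.transpose_apply, metr_apply, hsym]
  have h2 : ((metr (g t))⁻¹).transpose = ((metr (g t)).transpose)⁻¹ :=
    (Matrix.transpose_nonsing_inv _)
  rw [h1] at h2
  have := congrFun (congrFun h2 j) i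
  simpa [Matrix.transpose_apply, ginv] using this

lemma z_symm (hsym : ∀ x μ ν, g x (μ, ν) = g x (ν, μ)) (x : Fin 4 → ℝ) (a b c : Fin 4) :
    zf g x a b c = zf g x b a c := by
  unfold zf pd
  have h : (fun t => g t (a, b)) = fun t => g t (b, a) := funext fun t => hsym t a b
  rw [h]

lemma adj_entry (hdet : ∀ x, (metr (g x)).det < 0) (t : Fin 4 → ℝ) (k i : Fin 4) :
    (metr (g t)).adjugate k i = (metr (g t)).det * ginv (g t) k i := by
  rw [ginv_apply, ← mul_assoc, mul_inv_cancel₀ (hdet t).ne, one_mul]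

end Pointwise
section Curves

variable {g : (Fin 4 → ℝ) → (Fin 4 × Fin 4) → ℝ}

/-- trace-type contraction `g^{st} ∂_r g_{st}` -/
noncomputable def uu (g : (Fin 4 → ℝ) → (Fin 4 × Fin 4) → ℝ) (x : Fin 4 → ℝ) (r : Fin 4) : ℝ :=
  ∑ s, ∑ w, ginv (g x) s w * zf g x s w r

lemma lin0 (x : Fin 4 → ℝ) (β : Fin 4) : x + (0:ℝ) • (Pi.single β 1 : Fin 4 → ℝ) = x := by
  simp

lemma det_curve (hsmooth : ∀ p, ContDiff ℝ (⊤ : ℕ∞) fun x => g x p)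
    (hsym : ∀ x μ ν, g x (μ, ν) = g x (ν, μ))
    (hdet : ∀ x, (metr (g x)).det < 0) (x : Fin 4 → ℝ) (β : Fin 4) :
    HasDerivAt (fun s : ℝ => (metr (g (x + s • (Pi.single β 1 : Fin 4 → ℝ)))).det)
      ((metr (g x)).det * uu g x β) 0 := by
  have h := hasDerivAt_det4 (M := fun s : ℝ => metr (g (x + s • (Pi.single β 1 : Fin 4 → ℝ))))
    (A' := Matrix.of fun i k => zf g x i k β) (t₀ := 0)
    (fun i k => entry_curve hsmooth x β i k)
  simp only [lin0] at h
  convert h using 1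
  unfold uu
  rw [Finset.mul_sum]
  refine Finset.sum_congr rfl fun i _ => ?_
  rw [Finset.mul_sum]
  refine Finset.sum_congr rfl fun k _ => ?_
  rw [adj_entry hdet, Matrix.of_apply]
  rw [ginv_symm hsym x k i]
  ring

lemma sqrt_curve (hsmooth : ∀ p, ContDiff ℝ (⊤ : ℕ∞) fun x => g x p)
    (hsym : ∀ x μ ν, g x (μ, ν) = g x (ν, μ))
    (hdet : ∀ x, (metr (g x)).det < 0) (x : Fin 4 → ℝ) (β : Fin 4) :
    HasDerivAt (fun s : ℝ => Real.sqrt (-(metr (g (x + s • (Pi.single β 1 : Fin 4 → ℝ)))).det))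
      (Real.sqrt (-(metr (g x)).det) * uu g x β / 2) 0 := by
  have hd := hdet x
  have hpos : (0:ℝ) < -(metr (g x)).det := by linarith
  have hinner : HasDerivAt
      (fun s : ℝ => -(metr (g (x + s • (Pi.single β 1 : Fin 4 → ℝ)))).det)
      (-((metr (g x)).det * uu g x β)) 0 := (det_curve hsmooth hsym hdet x β).neg
  set F : ℝ → ℝ := fun s : ℝ => -(metr (g (x + s • (Pi.single β 1 : Fin 4 → ℝ)))).det with hF
  have hF0 : F 0 = -(metr (g x)).det := by rw [hF]; simp only [lin0]
  have hsq : HasDerivAt Real.sqrt (1 / (2 * Real.sqrt (F 0))) (F 0) := by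
    rw [hF0]; exact Real.hasDerivAt_sqrt hpos.ne'
  have h := hsq.comp (0:ℝ) hinner
  have hS : Real.sqrt (-(metr (g x)).det) > 0 := Real.sqrt_pos.mpr hpos
  have hS2 : Real.sqrt (-(metr (g x)).det) ^ 2 = -(metr (g x)).det :=
    Real.sq_sqrt hpos.le
  refine h.congr_deriv ?_
  symm
  rw [hF0]
  have hSne : Real.sqrt (-(metr (g x)).det) ≠ 0 := ne_of_gt hS
  field_simp
  linear_combination (uu g x β) * hS2

lemma ginv_diff (hsmooth : ∀ p, ContDiff ℝ (⊤ : ℕ∞) fun x => g x p)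
    (hdet : ∀ x, (metr (g x)).det < 0) (x : Fin 4 → ℝ) (i j : Fin 4) :
    DifferentiableAt ℝ (fun t => ginv (g t) i j) x :=
  ginv_diff_gen (Y := g) (fun p => entry_diff hsmooth p x) (hdet x).ne i j

lemma ginv_curve (hsmooth : ∀ p, ContDiff ℝ (⊤ : ℕ∞) fun x => g x p)
    (hdet : ∀ x, (metr (g x)).det < 0) (x : Fin 4 → ℝ) (β i j : Fin 4) :
    HasDerivAt (fun s : ℝ => ginv (g (x + s • (Pi.single β 1 : Fin 4 → ℝ))) i j)
      (-∑ r, ∑ s, ginv (g x) i r * zf g x r s β * ginv (g x) s j) 0 := by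
  set W : Fin 4 → Fin 4 → ℝ :=
    fun a b => fderiv ℝ (fun t => ginv (g t) a b) x (Pi.single β 1 : Fin 4 → ℝ) with hWdef
  have hW : ∀ a b, HasDerivAt
      (fun s : ℝ => ginv (g (x + s • (Pi.single β 1 : Fin 4 → ℝ))) a b) (W a b) 0 :=
    fun a b => hasDerivAt_line (fun t => ginv (g t) a b) x _ (ginv_diff hsmooth hdet x a b)
  have key : ∀ a b : Fin 4,
      (∑ k, (zf g x a k β * ginv (g x) k b + metr (g x) a k * W k b)) = 0 := by
    intro a b
    have h1 : HasDerivAt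
        (fun s : ℝ => ∑ k, metr (g (x + s • (Pi.single β 1 : Fin 4 → ℝ))) a k *
          ginv (g (x + s • (Pi.single β 1 : Fin 4 → ℝ))) k b)
        (∑ k, (zf g x a k β * ginv (g x) k b + metr (g x) a k * W k b)) 0 := by
      apply HasDerivAt.fun_sum
      intro k _
      have := (entry_curve hsmooth x β a k).mul (hW k b)
      simp only [lin0] at this
      exact this
    have h2 : (fun s : ℝ => ∑ k, metr (g (x + s • (Pi.single β 1 : Fin 4 → ℝ))) a k *
          ginv (g (x + s • (Pi.single β 1 : Fin 4 → ℝ))) k b)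
        = fun _ => if a = b then (1:ℝ) else 0 :=
      funext fun s => mul_inv_entry hdet _ a b
    have h3 : HasDerivAt (fun s : ℝ => ∑ k, metr (g (x + s • (Pi.single β 1 : Fin 4 → ℝ))) a k *
          ginv (g (x + s • (Pi.single β 1 : Fin 4 → ℝ))) k b) 0 0 := by
      rw [h2]; exact hasDerivAt_const _ _
    exact h1.unique h3
  have hWval : W i j = -∑ r, ∑ s, ginv (g x) i r * zf g x r s β * ginv (g x) s j := by
    have e1 : ∑ r, ginv (g x) i r *
        (∑ k, (zf g x r k β * ginv (g x) k j + metr (g x) r k * W k j)) = 0 := by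
      rw [Finset.sum_eq_zero]; intro r _; rw [key r j, mul_zero]
    have e2 : ∑ r, ginv (g x) i r *
        (∑ k, (zf g x r k β * ginv (g x) k j + metr (g x) r k * W k j))
        = (∑ r, ∑ s, ginv (g x) i r * zf g x r s β * ginv (g x) s j) + W i j := by
      have expand : ∀ r, ginv (g x) i r *
          (∑ k, (zf g x r k β * ginv (g x) k j + metr (g x) r k * W k j))
          = (∑ k, ginv (g x) i r * zf g x r k β * ginv (g x) k j)
            + ∑ k, ginv (g x) i r * metr (g x) r k * W k j := by
        intro r
        rw [Finset.mul_sum, ← Finset.sum_add_distrib]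
        refine Finset.sum_congr rfl fun k _ => by ring
      simp only [expand]
      rw [Finset.sum_add_distrib]
      congr 1
      rw [Finset.sum_comm]
      have : ∀ k, (∑ r, ginv (g x) i r * metr (g x) r k * W k j)
          = (if i = k then (1:ℝ) else 0) * W k j := by
        intro k
        rw [← Finset.sum_mul]
        congr 1
        exact inv_mul_entry hdet x i k
      simp only [this, ite_mul, one_mul, zero_mul]
      rw [Finset.sum_ite_eq]
      simp
    rw [e2] at e1
    linarith
  rw [← hWval]
  exact hW i j

end Curves
section HilbertDiff

lemma coord_y_diff (q : Fin 4 × Fin 4) (p : HJet) :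
    DifferentiableAt ℝ (fun w : HJet => w.1 q) p := by
  have h := ((ContinuousLinearMap.proj (R := ℝ) (φ := fun _ : Fin 4 × Fin 4 => ℝ) q).comp
    (ContinuousLinearMap.fst ℝ ((Fin 4 × Fin 4) → ℝ)
      (((Fin 4 × Fin 4 × Fin 4) → ℝ) × ((Fin 4 × Fin 4 × Fin 4 × Fin 4) → ℝ)))).differentiableAt
    (x := p)
  exact h

lemma coord_z1_diff (q : Fin 4 × Fin 4 × Fin 4) (p : HJet) :
    DifferentiableAt ℝ (fun w : HJet => w.2.1 q) p := by
  have h := ((ContinuousLinearMap.proj (R := ℝ) (φ := fun _ : Fin 4 × Fin 4 × Fin 4 => ℝ) q).comp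
    ((ContinuousLinearMap.fst ℝ ((Fin 4 × Fin 4 × Fin 4) → ℝ)
        ((Fin 4 × Fin 4 × Fin 4 × Fin 4) → ℝ)).comp
      (ContinuousLinearMap.snd ℝ ((Fin 4 × Fin 4) → ℝ)
        (((Fin 4 × Fin 4 × Fin 4) → ℝ) × ((Fin 4 × Fin 4 × Fin 4 × Fin 4) → ℝ))))).differentiableAt
    (x := p)
  exact h

lemma coord_z2_diff (q : Fin 4 × Fin 4 × Fin 4 × Fin 4) (p : HJet) :
    DifferentiableAt ℝ (fun w : HJet => w.2.2 q) p := by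
  have h := ((ContinuousLinearMap.proj (R := ℝ)
      (φ := fun _ : Fin 4 × Fin 4 × Fin 4 × Fin 4 => ℝ) q).comp
    ((ContinuousLinearMap.snd ℝ ((Fin 4 × Fin 4 × Fin 4) → ℝ)
        ((Fin 4 × Fin 4 × Fin 4 × Fin 4) → ℝ)).comp
      (ContinuousLinearMap.snd ℝ ((Fin 4 × Fin 4) → ℝ)
        (((Fin 4 × Fin 4 × Fin 4) → ℝ) × ((Fin 4 × Fin 4 × Fin 4 × Fin 4) → ℝ))))).differentiableAt
    (x := p)
  exact h

lemma hilbert_diff {p : HJet} (hd : (metr p.1).det ≠ 0) :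
    DifferentiableAt ℝ HilbertL p := by
  have hgi : ∀ i j, DifferentiableAt ℝ (fun w : HJet => ginv w.1 i j) p :=
    fun i j => ginv_diff_gen (Y := fun w : HJet => w.1) (fun q => coord_y_diff q p) hd i j
  have hGamma : ∀ a b c, DifferentiableAt ℝ (fun w : HJet => Gamma1 w.2.1 a b c) p := by
    intro a b c
    simp only [Gamma1]
    exact (((coord_z1_diff _ p).add (coord_z1_diff _ p)).sub (coord_z1_diff _ p)).const_mul _
  have hR1 : DifferentiableAt ℝ (fun w : HJet => R1fun w.1 w.2.1) p := by
    simp only [R1fun]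
    apply DifferentiableAt.fun_sum; intro m _
    apply DifferentiableAt.fun_sum; intro n _
    apply DifferentiableAt.fun_sum; intro l _
    apply DifferentiableAt.fun_sum; intro a _
    apply DifferentiableAt.fun_sum; intro b _
    apply DifferentiableAt.fun_sum; intro c _
    exact ((hGamma _ _ _).mul (hGamma _ _ _)).mul
      ((((hgi _ _).mul (hgi _ _)).mul (hgi _ _)).neg.add
        (((hgi _ _).mul (hgi _ _)).mul (hgi _ _)))
  have hR2 : DifferentiableAt ℝ (fun w : HJet => R2fun w.1 w.2.2) p := by
    simp only [R2fun]
    apply DifferentiableAt.const_mul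
    apply DifferentiableAt.fun_sum; intro m _
    apply DifferentiableAt.fun_sum; intro n _
    apply DifferentiableAt.fun_sum; intro a _
    apply DifferentiableAt.fun_sum; intro b _
    exact (coord_z2_diff _ p).mul
      ((((hgi _ _).mul (hgi _ _)).add ((hgi _ _).mul (hgi _ _))).sub
        ((((hgi _ _).const_mul 2).mul (hgi _ _))))
  have hs : DifferentiableAt ℝ (fun w : HJet => Real.sqrt (-(metr w.1).det)) p :=
    sqrt_diff_gen (Y := fun w : HJet => w.1) (fun q => coord_y_diff q p) hd
  have hL : HilbertL = fun w : HJet =>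
      (R1fun w.1 w.2.1 + R2fun w.1 w.2.2) * Real.sqrt (-(metr w.1).det) := rfl
  rw [hL]
  exact (hR1.add hR2).mul hs

end HilbertDiff
section P4Hform

abbrev F4 : Type := Fin 4 × Fin 4 × Fin 4 × Fin 4

lemma nest4 (F : F4 → ℝ) : (∑ a, ∑ b, ∑ c, ∑ d, F (a, b, c, d)) = ∑ p, F p := by
  rw [Fintype.sum_prod_type]
  exact Finset.sum_congr rfl fun a _ => nest3 (fun p => F (a, p))

lemma sum4_delta (q : F4) (F : F4 → ℝ) :
    (∑ p, (Pi.single q (1:ℝ) : F4 → ℝ) p * F p) = F q := by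
  rw [Finset.sum_eq_single q]
  · simp
  · intro p _ hp; simp [Pi.single_apply, hp]
  · simp

lemma collapse4 (q : F4) (F : Fin 4 → Fin 4 → Fin 4 → Fin 4 → ℝ) :
    (∑ a, ∑ b, ∑ c, ∑ d, (Pi.single q (1:ℝ) : F4 → ℝ) (a,b,c,d) * F a b c d)
      = F q.1 q.2.1 q.2.2.1 q.2.2.2 :=
  (nest4 fun p => (Pi.single q (1:ℝ) : F4 → ℝ) p * F p.1 p.2.1 p.2.2.1 p.2.2.2).trans
    (sum4_delta q fun p => F p.1 p.2.1 p.2.2.1 p.2.2.2)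

lemma R2_affine (y : (Fin 4 × Fin 4) → ℝ) (z w : (Fin 4 × Fin 4 × Fin 4 × Fin 4) → ℝ)
    (s : ℝ) : R2fun y (z + s • w) = R2fun y z + s * R2fun y w := by
  unfold R2fun
  have key : (∑ m, ∑ n, ∑ a, ∑ b, (z + s • w) (m,n,a,b) *
        (ginv y m a * ginv y n b + ginv y m b * ginv y n a - 2 * ginv y m n * ginv y a b))
      = (∑ m, ∑ n, ∑ a, ∑ b, z (m,n,a,b) *
          (ginv y m a * ginv y n b + ginv y m b * ginv y n a - 2 * ginv y m n * ginv y a b))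
        + s * ∑ m, ∑ n, ∑ a, ∑ b, w (m,n,a,b) *
          (ginv y m a * ginv y n b + ginv y m b * ginv y n a - 2 * ginv y m n * ginv y a b) := by
    simp only [Pi.add_apply, Pi.smul_apply, smul_eq_mul, add_mul, mul_assoc,
      Finset.sum_add_distrib, ← Finset.mul_sum]
  rw [key]; ring

lemma R2_single (y : (Fin 4 × Fin 4) → ℝ) (μ ν α β : Fin 4) :
    R2fun y (Pi.single (μ,ν,α,β) (1:ℝ)) = 1/2 * (ginv y μ α * ginv y ν β
      + ginv y μ β * ginv y ν α - 2 * ginv y μ ν * ginv y α β) := by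
  unfold R2fun
  exact congrArg (fun r => (1/2 : ℝ) * r) (collapse4 (μ,ν,α,β)
    (fun m n a b => ginv y m a * ginv y n b + ginv y m b * ginv y n a
      - 2 * ginv y m n * ginv y a b))

variable {g : (Fin 4 → ℝ) → (Fin 4 × Fin 4) → ℝ}

lemma P4H_eq (hsmooth : ∀ p, ContDiff ℝ (⊤ : ℕ∞) fun x => g x p)
    (hdet : ∀ x, (metr (g x)).det < 0) (t : Fin 4 → ℝ) (μ ν α β : Fin 4) :
    P4H g t μ ν α β = 1/2 * (ginv (g t) μ α * ginv (g t) ν β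
      + ginv (g t) μ β * ginv (g t) ν α - 2 * ginv (g t) μ ν * ginv (g t) α β)
      * Real.sqrt (-(metr (g t)).det) := by
  unfold P4H
  have hdiff := hilbert_diff (p := jetH g t) (show (metr (jetH g t).1).det ≠ 0 from (hdet t).ne)
  set w : (Fin 4 × Fin 4 × Fin 4 × Fin 4) → ℝ := Pi.single (μ,ν,α,β) 1 with hw
  rw [fderiv_line HilbertL (jetH g t) ((0,0,w) : HJet) hdiff]
  have hcurve : (fun s : ℝ => HilbertL (jetH g t + s • ((0,0,w) : HJet)))
      = fun s => (R1fun (jetH g t).1 (jetH g t).2.1 + R2fun (jetH g t).1 (jetH g t).2.2)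
          * Real.sqrt (-(metr (jetH g t).1).det)
        + s * (R2fun (jetH g t).1 w * Real.sqrt (-(metr (jetH g t).1).det)) := by
    funext s
    have h1 : (jetH g t + s • ((0,0,w) : HJet)).1 = (jetH g t).1 := by simp
    have h2 : (jetH g t + s • ((0,0,w) : HJet)).2.1 = (jetH g t).2.1 := by simp
    have h3 : (jetH g t + s • ((0,0,w) : HJet)).2.2 = (jetH g t).2.2 + s • w := by simp
    show (R1fun _ _ + R2fun _ _) * Real.sqrt _ = _
    rw [h1, h2, h3, R2_affine]
    ring
  rw [hcurve]
  have hD : HasDerivAt (fun s : ℝ =>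
      (R1fun (jetH g t).1 (jetH g t).2.1 + R2fun (jetH g t).1 (jetH g t).2.2)
          * Real.sqrt (-(metr (jetH g t).1).det)
        + s * (R2fun (jetH g t).1 w * Real.sqrt (-(metr (jetH g t).1).det)))
      (R2fun (jetH g t).1 w * Real.sqrt (-(metr (jetH g t).1).det)) 0 := by
    have := (hasDerivAt_const (0:ℝ)
        ((R1fun (jetH g t).1 (jetH g t).2.1 + R2fun (jetH g t).1 (jetH g t).2.2)
          * Real.sqrt (-(metr (jetH g t).1).det))).add
      ((hasDerivAt_id (0:ℝ)).mul_const
        (R2fun (jetH g t).1 w * Real.sqrt (-(metr (jetH g t).1).det)))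
    exact this.congr_deriv (by simp)
  rw [hD.deriv]
  have hy : (jetH g t).1 = g t := rfl
  rw [hy, hw, R2_single]

end P4Hform
section DL1H

/-- coefficient tensor in `R₁` -/
noncomputable def CC (y : (Fin 4 × Fin 4) → ℝ) (m n l a b c : Fin 4) : ℝ :=
  -(ginv y m a * ginv y n l * ginv y b c) + ginv y m a * ginv y n c * ginv y l b

lemma R1fun_CC (y : (Fin 4 × Fin 4) → ℝ) (z : (Fin 4 × Fin 4 × Fin 4) → ℝ) :
    R1fun y z = ∑ m, ∑ n, ∑ l, ∑ a, ∑ b, ∑ c,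
      Gamma1 z m n l * Gamma1 z a b c * CC y m n l a b c := rfl

/-- the first-order coefficient in the expansion of `R₁` -/
noncomputable def DD (y : (Fin 4 × Fin 4) → ℝ) (z v : (Fin 4 × Fin 4 × Fin 4) → ℝ) : ℝ :=
  ∑ m, ∑ n, ∑ l, ∑ a, ∑ b, ∑ c,
    (Gamma1 v m n l * Gamma1 z a b c + Gamma1 z m n l * Gamma1 v a b c) * CC y m n l a b c

noncomputable def QQ (y : (Fin 4 × Fin 4) → ℝ) (v : (Fin 4 × Fin 4 × Fin 4) → ℝ) : ℝ :=
  ∑ m, ∑ n, ∑ l, ∑ a, ∑ b, ∑ c,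
    Gamma1 v m n l * Gamma1 v a b c * CC y m n l a b c

lemma gamma1_affine (z v : (Fin 4 × Fin 4 × Fin 4) → ℝ) (s : ℝ) (a b c : Fin 4) :
    Gamma1 (z + s • v) a b c = Gamma1 z a b c + s * Gamma1 v a b c := by
  simp only [Gamma1, Pi.add_apply, Pi.smul_apply, smul_eq_mul]
  ring

lemma R1_expand (y : (Fin 4 × Fin 4) → ℝ) (z v : (Fin 4 × Fin 4 × Fin 4) → ℝ) (s : ℝ) :
    R1fun y (z + s • v) = R1fun y z + s * DD y z v + s ^ 2 * QQ y v := by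
  rw [R1fun_CC, R1fun_CC]
  unfold DD QQ
  have e1 : (∑ m, ∑ n, ∑ l, ∑ a, ∑ b, ∑ c,
      Gamma1 (z + s • v) m n l * Gamma1 (z + s • v) a b c * CC y m n l a b c)
      = ∑ m, ∑ n, ∑ l, ∑ a, ∑ b, ∑ c,
        (Gamma1 z m n l * Gamma1 z a b c * CC y m n l a b c
          + s * ((Gamma1 v m n l * Gamma1 z a b c + Gamma1 z m n l * Gamma1 v a b c)
              * CC y m n l a b c)
          + s ^ 2 * (Gamma1 v m n l * Gamma1 v a b c * CC y m n l a b c)) := by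
    refine Finset.sum_congr rfl fun m _ => ?_
    refine Finset.sum_congr rfl fun n _ => ?_
    refine Finset.sum_congr rfl fun l _ => ?_
    refine Finset.sum_congr rfl fun a _ => ?_
    refine Finset.sum_congr rfl fun b _ => ?_
    refine Finset.sum_congr rfl fun c _ => ?_
    simp only [gamma1_affine]
    ring
  rw [e1]
  simp only [Finset.sum_add_distrib, ← Finset.mul_sum]

variable {g : (Fin 4 → ℝ) → (Fin 4 × Fin 4) → ℝ}

lemma dL1H_eq (hsmooth : ∀ p, ContDiff ℝ (⊤ : ℕ∞) fun x => g x p)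
    (hdet : ∀ x, (metr (g x)).det < 0) (x : Fin 4 → ℝ) (μ ν α : Fin 4) :
    dL1H g x μ ν α = DD (g x) ((jetH g x).2.1)
        ((1 / 2 : ℝ) • (Pi.single (μ, ν, α) (1 : ℝ) + Pi.single (ν, μ, α) (1 : ℝ)))
      * Real.sqrt (-(metr (g x)).det) := by
  unfold dL1H
  have hdiff := hilbert_diff (p := jetH g x) (show (metr (jetH g x).1).det ≠ 0 from (hdet x).ne)
  set v : (Fin 4 × Fin 4 × Fin 4) → ℝ :=
    (1 / 2 : ℝ) • (Pi.single (μ, ν, α) (1 : ℝ) + Pi.single (ν, μ, α) (1 : ℝ)) with hv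
  rw [fderiv_line HilbertL (jetH g x) ((0, v, 0) : HJet) hdiff]
  have hcurve : (fun s : ℝ => HilbertL (jetH g x + s • ((0, v, 0) : HJet)))
      = fun s => (R1fun (jetH g x).1 (jetH g x).2.1 + R2fun (jetH g x).1 (jetH g x).2.2)
          * Real.sqrt (-(metr (jetH g x).1).det)
        + s * (DD (jetH g x).1 (jetH g x).2.1 v * Real.sqrt (-(metr (jetH g x).1).det))
        + s ^ 2 * (QQ (jetH g x).1 v * Real.sqrt (-(metr (jetH g x).1).det)) := by
    funext s
    have h1 : (jetH g x + s • ((0, v, 0) : HJet)).1 = (jetH g x).1 := by simp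
    have h2 : (jetH g x + s • ((0, v, 0) : HJet)).2.1 = (jetH g x).2.1 + s • v := by simp
    have h3 : (jetH g x + s • ((0, v, 0) : HJet)).2.2 = (jetH g x).2.2 := by simp
    show (R1fun _ _ + R2fun _ _) * Real.sqrt _ = _
    rw [h1, h2, h3, R1_expand]
    ring
  rw [hcurve]
  have hD : HasDerivAt (fun s : ℝ =>
      (R1fun (jetH g x).1 (jetH g x).2.1 + R2fun (jetH g x).1 (jetH g x).2.2)
          * Real.sqrt (-(metr (jetH g x).1).det)
        + s * (DD (jetH g x).1 (jetH g x).2.1 v * Real.sqrt (-(metr (jetH g x).1).det))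
        + s ^ 2 * (QQ (jetH g x).1 v * Real.sqrt (-(metr (jetH g x).1).det)))
      (DD (jetH g x).1 (jetH g x).2.1 v * Real.sqrt (-(metr (jetH g x).1).det)) 0 := by
    have h4 := (((hasDerivAt_const (0:ℝ)
        ((R1fun (jetH g x).1 (jetH g x).2.1 + R2fun (jetH g x).1 (jetH g x).2.2)
          * Real.sqrt (-(metr (jetH g x).1).det))).add
      ((hasDerivAt_id (0:ℝ)).mul_const
        (DD (jetH g x).1 (jetH g x).2.1 v * Real.sqrt (-(metr (jetH g x).1).det)))).add
      ((hasDerivAt_pow 2 (0:ℝ)).mul_const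
        (QQ (jetH g x).1 v * Real.sqrt (-(metr (jetH g x).1).det))))
    exact h4.congr_deriv (by simp)
  rw [hD.deriv]
  rfl

end DL1H
section Algebra1

variable {g : (Fin 4 → ℝ) → (Fin 4 × Fin 4) → ℝ}

/-- contraction of `Γ` against the `R₁` coefficient tensor -/
noncomputable def Tf (g : (Fin 4 → ℝ) → (Fin 4 × Fin 4) → ℝ) (x : Fin 4 → ℝ)
    (a b c : Fin 4) : ℝ :=
  ∑ d, ∑ e, ∑ f, Gamma1 ((jetH g x).2.1) d e f * CC (g x) a b c d e f

lemma gamma_v (μ ν α : Fin 4) (p q r : Fin 4) :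
    Gamma1 ((1 / 2 : ℝ) • (Pi.single (μ, ν, α) (1 : ℝ) + Pi.single (ν, μ, α) (1 : ℝ))) p q r
      = 1/4 * ((Pi.single (μ,ν,α) (1:ℝ) : F3 → ℝ) (q, p, r)
        + (Pi.single (ν,μ,α) (1:ℝ) : F3 → ℝ) (q, p, r)
        + ((Pi.single (μ,ν,α) (1:ℝ) : F3 → ℝ) (r, p, q)
        + (Pi.single (ν,μ,α) (1:ℝ) : F3 → ℝ) (r, p, q))
        - ((Pi.single (μ,ν,α) (1:ℝ) : F3 → ℝ) (q, r, p)
        + (Pi.single (ν,μ,α) (1:ℝ) : F3 → ℝ) (q, r, p))) := by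
  simp only [Gamma1, Pi.smul_apply, Pi.add_apply, smul_eq_mul]
  ring

lemma Tf'_eq (hsym : ∀ x μ ν, g x (μ, ν) = g x (ν, μ)) (x : Fin 4 → ℝ) (a b c : Fin 4) :
    (∑ m, ∑ n, ∑ l, Gamma1 ((jetH g x).2.1) m n l * CC (g x) m n l a b c)
      = Tf g x a b c := by
  unfold Tf
  refine Finset.sum_congr rfl fun m _ => ?_
  refine Finset.sum_congr rfl fun n _ => ?_
  refine Finset.sum_congr rfl fun l _ => ?_
  unfold CC
  rw [ginv_symm hsym x m a, ginv_symm hsym x n l, ginv_symm hsym x b c,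
    ginv_symm hsym x n c, ginv_symm hsym x l b]
  ring

lemma DD_eval (hsym : ∀ x μ ν, g x (μ, ν) = g x (ν, μ)) (x : Fin 4 → ℝ) (μ ν α : Fin 4) :
    DD (g x) ((jetH g x).2.1)
        ((1 / 2 : ℝ) • (Pi.single (μ, ν, α) (1 : ℝ) + Pi.single (ν, μ, α) (1 : ℝ)))
      = 1/2 * (Tf g x ν μ α + Tf g x μ ν α + Tf g x ν α μ + Tf g x μ α ν
          - Tf g x α μ ν - Tf g x α ν μ) := by
  unfold DD
  simp only [gamma_v]
  simp only [add_mul, sub_mul, mul_add, mul_sub, mul_assoc, Finset.sum_add_distrib,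
    Finset.sum_sub_distrib, ← Finset.mul_sum]
  simp only [collapse3_213, collapse3_312, collapse3_231]
  simp only [show ∀ a b : ℝ, a * (1/4 * b) = 1/4 * (a*b) from fun a b => by ring,
    ← Finset.mul_sum]
  rw [Tf'_eq hsym, Tf'_eq hsym, Tf'_eq hsym, Tf'_eq hsym, Tf'_eq hsym, Tf'_eq hsym]
  unfold Tf
  ring

end Algebra1

lemma sum3_perm_231' (F : Fin 4 → Fin 4 → Fin 4 → ℝ) :
    (∑ a, ∑ b, ∑ c, F a b c) = ∑ a, ∑ b, ∑ c, F b c a :=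
  (sum3_perm e231 F).trans (Finset.sum_congr rfl fun _ _ => Finset.sum_congr rfl fun _ _ =>
    Finset.sum_congr rfl fun _ _ => rfl)

lemma sum3_perm_312' (F : Fin 4 → Fin 4 → Fin 4 → ℝ) :
    (∑ a, ∑ b, ∑ c, F a b c) = ∑ a, ∑ b, ∑ c, F c a b :=
  (sum3_perm e312 F).trans (Finset.sum_congr rfl fun _ _ => Finset.sum_congr rfl fun _ _ =>
    Finset.sum_congr rfl fun _ _ => rfl)

lemma sum3_perm_132' (F : Fin 4 → Fin 4 → Fin 4 → ℝ) :
    (∑ a, ∑ b, ∑ c, F a b c) = ∑ a, ∑ b, ∑ c, F a c b :=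
  (sum3_perm e132 F).trans (Finset.sum_congr rfl fun _ _ => Finset.sum_congr rfl fun _ _ =>
    Finset.sum_congr rfl fun _ _ => rfl)

lemma sum3_perm_321' (F : Fin 4 → Fin 4 → Fin 4 → ℝ) :
    (∑ a, ∑ b, ∑ c, F a b c) = ∑ a, ∑ b, ∑ c, F c b a :=
  (sum3_perm e321 F).trans (Finset.sum_congr rfl fun _ _ => Finset.sum_congr rfl fun _ _ =>
    Finset.sum_congr rfl fun _ _ => rfl)

section Algebra2

variable {g : (Fin 4 → ℝ) → (Fin 4 × Fin 4) → ℝ}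

noncomputable def Vv (g : (Fin 4 → ℝ) → (Fin 4 × Fin 4) → ℝ) (x : Fin 4 → ℝ) (lam : Fin 4) : ℝ :=
  ∑ m, ∑ n, ∑ r, ginv (g x) m n * ginv (g x) lam r * Gamma1 ((jetH g x).2.1) r m n

noncomputable def Uu (g : (Fin 4 → ℝ) → (Fin 4 × Fin 4) → ℝ) (x : Fin 4 → ℝ)
    (lam m n : Fin 4) : ℝ :=
  ∑ a, ∑ b, ∑ c, ginv (g x) lam a * ginv (g x) m b * ginv (g x) n c *
    Gamma1 ((jetH g x).2.1) a b c

noncomputable def WW (g : (Fin 4 → ℝ) → (Fin 4 × Fin 4) → ℝ) (x : Fin 4 → ℝ)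
    (i j β : Fin 4) : ℝ :=
  -∑ r, ∑ s, ginv (g x) i r * zf g x r s β * ginv (g x) s j

lemma Gamma_symm (hsym : ∀ x μ ν, g x (μ, ν) = g x (ν, μ)) (x : Fin 4 → ℝ) (a b c : Fin 4) :
    Gamma1 ((jetH g x).2.1) a b c = Gamma1 ((jetH g x).2.1) a c b := by
  simp only [Gamma1, jet_z]
  rw [z_symm hsym x b c a]
  ring

lemma z_Gamma (hsym : ∀ x μ ν, g x (μ, ν) = g x (ν, μ)) (x : Fin 4 → ℝ) (a b c : Fin 4) :
    zf g x a b c = Gamma1 ((jetH g x).2.1) a b c + Gamma1 ((jetH g x).2.1) b a c := by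
  simp only [Gamma1, jet_z]
  rw [z_symm hsym x b a c, z_symm hsym x c a b, z_symm hsym x b c a]
  ring

lemma Tf_closed (hsym : ∀ x μ ν, g x (μ, ν) = g x (ν, μ)) (x : Fin 4 → ℝ) (a b c : Fin 4) :
    Tf g x a b c = -(ginv (g x) b c * Vv g x a) + Uu g x a c b := by
  unfold Tf CC Vv Uu
  have e1 : (∑ d, ∑ e, ∑ f, Gamma1 ((jetH g x).2.1) d e f *
        (-(ginv (g x) a d * ginv (g x) b c * ginv (g x) e f)
          + ginv (g x) a d * ginv (g x) b f * ginv (g x) c e))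
      = (∑ d, ∑ e, ∑ f, -(ginv (g x) b c *
          (ginv (g x) e f * ginv (g x) a d * Gamma1 ((jetH g x).2.1) d e f)))
        + ∑ d, ∑ e, ∑ f, ginv (g x) a d * ginv (g x) c e * ginv (g x) b f *
            Gamma1 ((jetH g x).2.1) d e f := by
    simp only [← Finset.sum_add_distrib]
    refine Finset.sum_congr rfl fun d _ => ?_
    refine Finset.sum_congr rfl fun e _ => ?_
    refine Finset.sum_congr rfl fun f _ => ?_
    ring
  rw [e1]
  congr 1
  · simp only [Finset.sum_neg_distrib, ← Finset.mul_sum]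
    refine congrArg Neg.neg (congrArg (fun t => ginv (g x) b c * t) ?_)
    exact (sum3_perm_231' (fun m n r => ginv (g x) m n * ginv (g x) a r *
      Gamma1 ((jetH g x).2.1) r m n)).symm

lemma Uu_symm (hsym : ∀ x μ ν, g x (μ, ν) = g x (ν, μ)) (x : Fin 4 → ℝ) (l m n : Fin 4) :
    Uu g x l m n = Uu g x l n m := by
  unfold Uu
  refine (sum3_perm_132' (fun a b c => ginv (g x) l a * ginv (g x) m b * ginv (g x) n c *
    Gamma1 ((jetH g x).2.1) a b c)).trans ?_
  refine Finset.sum_congr rfl fun a _ => ?_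
  refine Finset.sum_congr rfl fun b _ => ?_
  refine Finset.sum_congr rfl fun c _ => ?_
  rw [← Gamma_symm hsym x a b c]
  ring

lemma claimA_core (hsym : ∀ x μ ν, g x (μ, ν) = g x (ν, μ)) (x : Fin 4 → ℝ) (i j k : Fin 4) :
    (∑ β, ∑ r, ∑ s, ginv (g x) i r * zf g x r s β * ginv (g x) s j * ginv (g x) k β)
      = Uu g x i j k + Uu g x j i k := by
  have e1 : (∑ β, ∑ r, ∑ s, ginv (g x) i r * zf g x r s β * ginv (g x) s j * ginv (g x) k β)
      = (∑ β, ∑ r, ∑ s, ginv (g x) i r * ginv (g x) j s * ginv (g x) k β *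
          Gamma1 ((jetH g x).2.1) r s β)
        + ∑ β, ∑ r, ∑ s, ginv (g x) j s * ginv (g x) i r * ginv (g x) k β *
          Gamma1 ((jetH g x).2.1) s r β := by
    simp only [← Finset.sum_add_distrib]
    refine Finset.sum_congr rfl fun β _ => ?_
    refine Finset.sum_congr rfl fun r _ => ?_
    refine Finset.sum_congr rfl fun s _ => ?_
    rw [z_Gamma hsym x r s β, ginv_symm hsym x s j]
    ring
  rw [e1]
  unfold Uu
  congr 1
  · exact (sum3_perm_231' (fun p q w => ginv (g x) i p * ginv (g x) j q * ginv (g x) k w *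
      Gamma1 ((jetH g x).2.1) p q w)).symm
  · exact (sum3_perm_321' (fun p q w => ginv (g x) j p * ginv (g x) i q * ginv (g x) k w *
      Gamma1 ((jetH g x).2.1) p q w)).symm

lemma claimB_core (hsym : ∀ x μ ν, g x (μ, ν) = g x (ν, μ)) (x : Fin 4 → ℝ) (i : Fin 4) :
    (∑ β, ∑ r, ∑ s, ginv (g x) i r * zf g x r s β * ginv (g x) s β)
      = Vv g x i + 1/2 * ∑ r, ginv (g x) i r * uu g x r := by
  have e1 : (∑ β, ∑ r, ∑ s, ginv (g x) i r * zf g x r s β * ginv (g x) s β)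
      = (∑ β, ∑ r, ∑ s, ginv (g x) s β * ginv (g x) i r * Gamma1 ((jetH g x).2.1) r s β)
        + ∑ β, ∑ r, ∑ s, ginv (g x) i r * ginv (g x) s β * Gamma1 ((jetH g x).2.1) s β r := by
    simp only [← Finset.sum_add_distrib]
    refine Finset.sum_congr rfl fun β _ => ?_
    refine Finset.sum_congr rfl fun r _ => ?_
    refine Finset.sum_congr rfl fun s _ => ?_
    rw [z_Gamma hsym x r s β, Gamma_symm hsym x s r β]
    ring
  rw [e1]
  congr 1
  · unfold Vv
    exact (sum3_perm_312' (fun m n w => ginv (g x) m n * ginv (g x) i w *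
      Gamma1 ((jetH g x).2.1) w m n)).symm
  · -- halved trace term
    have swap := sum3_perm_321' (fun a b c => ginv (g x) i b * ginv (g x) c a *
      Gamma1 ((jetH g x).2.1) c a b)
    have e2 : (∑ a, ∑ b, ∑ c, (ginv (g x) i b * ginv (g x) c a *
          Gamma1 ((jetH g x).2.1) c a b
        + ginv (g x) i b * ginv (g x) a c * Gamma1 ((jetH g x).2.1) a c b))
        = ∑ a, ∑ b, ∑ c, ginv (g x) i b * ginv (g x) c a * zf g x c a b := by
      refine Finset.sum_congr rfl fun a _ => ?_
      refine Finset.sum_congr rfl fun b _ => ?_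
      refine Finset.sum_congr rfl fun c _ => ?_
      rw [z_Gamma hsym x c a b, ginv_symm hsym x a c]
      ring
    have e3 : (∑ a, ∑ b, ∑ c, ginv (g x) i b * ginv (g x) c a * zf g x c a b)
        = ∑ r, ∑ s, ∑ w, ginv (g x) i r * ginv (g x) s w * zf g x s w r :=
      (sum3_perm_231' (fun r s w => ginv (g x) i r * ginv (g x) s w * zf g x s w r)).symm
    have e4 : (∑ r, ∑ s, ∑ w, ginv (g x) i r * ginv (g x) s w * zf g x s w r)
        = ∑ r, ginv (g x) i r * uu g x r := by
      refine Finset.sum_congr rfl fun r _ => ?_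
      unfold uu
      rw [Finset.mul_sum]
      refine Finset.sum_congr rfl fun s _ => ?_
      rw [Finset.mul_sum]
      exact Finset.sum_congr rfl fun w _ => by ring
    have hdoub : 2 * (∑ a, ∑ b, ∑ c, ginv (g x) i b * ginv (g x) c a *
          Gamma1 ((jetH g x).2.1) c a b)
        = ∑ a, ∑ b, ∑ c, (ginv (g x) i b * ginv (g x) c a *
            Gamma1 ((jetH g x).2.1) c a b
          + ginv (g x) i b * ginv (g x) a c * Gamma1 ((jetH g x).2.1) a c b) := by
      simp only [Finset.sum_add_distrib]
      rw [← swap]; ring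
    have final : 2 * (∑ a, ∑ b, ∑ c, ginv (g x) i b * ginv (g x) c a *
          Gamma1 ((jetH g x).2.1) c a b)
        = ∑ r, ginv (g x) i r * uu g x r := by
      rw [hdoub, e2, e3, e4]
    linarith [final]

lemma claimA (hsym : ∀ x μ ν, g x (μ, ν) = g x (ν, μ)) (x : Fin 4 → ℝ) (i j k : Fin 4) :
    (∑ β, WW g x i j β * ginv (g x) k β) = -(Uu g x i j k + Uu g x j i k) := by
  unfold WW
  simp only [neg_mul, Finset.sum_neg_distrib, Finset.sum_mul]
  exact congrArg Neg.neg (claimA_core hsym x i j k)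

lemma claimB (hsym : ∀ x μ ν, g x (μ, ν) = g x (ν, μ)) (x : Fin 4 → ℝ) (i : Fin 4) :
    (∑ β, WW g x i β β) = -(Vv g x i + 1/2 * ∑ r, ginv (g x) i r * uu g x r) := by
  unfold WW
  simp only [Finset.sum_neg_distrib]
  exact congrArg Neg.neg (claimB_core hsym x i)

end Algebra2
section PdP4H

variable {g : (Fin 4 → ℝ) → (Fin 4 × Fin 4) → ℝ}

lemma pd_P4H (hsmooth : ∀ p, ContDiff ℝ (⊤ : ℕ∞) fun x => g x p)
    (hsym : ∀ x μ ν, g x (μ, ν) = g x (ν, μ))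
    (hdet : ∀ x, (metr (g x)).det < 0) (x : Fin 4 → ℝ) (μ ν α β : Fin 4) :
    pd β (fun t => P4H g t μ ν α β) x
      = 1/2 * ((WW g x μ α β * ginv (g x) ν β + ginv (g x) μ α * WW g x ν β β)
          + (WW g x μ β β * ginv (g x) ν α + ginv (g x) μ β * WW g x ν α β)
          - (2 * WW g x μ ν β * ginv (g x) α β + 2 * ginv (g x) μ ν * WW g x α β β))
          * Real.sqrt (-(metr (g x)).det)
        + 1/2 * (ginv (g x) μ α * ginv (g x) ν β + ginv (g x) μ β * ginv (g x) ν α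
            - 2 * ginv (g x) μ ν * ginv (g x) α β)
          * (Real.sqrt (-(metr (g x)).det) * uu g x β / 2) := by
  have hfun : (fun t => P4H g t μ ν α β)
      = fun t => 1/2 * (ginv (g t) μ α * ginv (g t) ν β + ginv (g t) μ β * ginv (g t) ν α
          - 2 * ginv (g t) μ ν * ginv (g t) α β) * Real.sqrt (-(metr (g t)).det) :=
    funext fun t => P4H_eq hsmooth hdet t μ ν α β
  unfold pd
  rw [hfun]
  have hg : ∀ i j, DifferentiableAt ℝ (fun t => ginv (g t) i j) x := ginv_diff hsmooth hdet x
  have hs : DifferentiableAt ℝ (fun t => Real.sqrt (-(metr (g t)).det)) x :=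
    sqrt_diff_gen (Y := g) (fun p => entry_diff hsmooth p x) (hdet x).ne
  have hdiffF : DifferentiableAt ℝ (fun t => 1/2 * (ginv (g t) μ α * ginv (g t) ν β
      + ginv (g t) μ β * ginv (g t) ν α - 2 * ginv (g t) μ ν * ginv (g t) α β)
      * Real.sqrt (-(metr (g t)).det)) x :=
    (((((hg μ α).mul (hg ν β)).add ((hg μ β).mul (hg ν α))).sub
      (((hg μ ν).const_mul 2).mul (hg α β))).const_mul (1/2)).mul hs
  rw [fderiv_line _ x (Pi.single β 1 : Fin 4 → ℝ) hdiffF]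
  have h1 := ginv_curve hsmooth hdet x β μ α
  have h2 := ginv_curve hsmooth hdet x β ν β
  have h3 := ginv_curve hsmooth hdet x β μ β
  have h4 := ginv_curve hsmooth hdet x β ν α
  have h5 := ginv_curve hsmooth hdet x β μ ν
  have h6 := ginv_curve hsmooth hdet x β α β
  have hsc := sqrt_curve hsmooth hsym hdet x β
  have htot := ((((h1.mul h2).add (h3.mul h4)).sub
    ((h5.const_mul 2).mul h6)).const_mul (1/2)).mul hsc
  refine Eq.trans htot.deriv ?_
  simp only [lin0, Pi.mul_apply, Pi.add_apply, Pi.sub_apply]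
  unfold WW
  ring
end PdP4H
/-- The first Ostrogradski momentum of the Hilbert Lagrangian is
`P^{μνα} = ∂L/∂g_{μν,α} − ∂_β P^{μναβ}
 = (1/2)(−g^{μα} Γ^ν − g^{να} Γ^μ + Γ^{νμα} + Γ^{μνα}) √(−det g)`. -/
theorem hilbert_first_momentum
    (g : (Fin 4 → ℝ) → (Fin 4 × Fin 4) → ℝ)
    (Γup : (Fin 4 → ℝ) → Fin 4 → Fin 4 → Fin 4 → ℝ)
    (Γvec : (Fin 4 → ℝ) → Fin 4 → ℝ)
    (hsmooth : ∀ p, ContDiff ℝ (⊤ : ℕ∞) fun x => g x p)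
    (hsym : ∀ x μ ν, g x (μ, ν) = g x (ν, μ))
    (hdet : ∀ x, (metr (g x)).det < 0)
    -- `Γ^{λμν} = g^{λα} g^{μβ} g^{νγ} Γ_{αβγ}` along the section
    (hΓup : ∀ x lam μ ν, Γup x lam μ ν =
      ∑ α, ∑ β, ∑ γ, ginv (g x) lam α * ginv (g x) μ β * ginv (g x) ν γ *
        Gamma1 (jetH g x).2.1 α β γ)
    -- `Γ^λ = g^{μν} g^{λρ} Γ_{ρμν}` along the section
    (hΓvec : ∀ x lam, Γvec x lam =
      ∑ μ, ∑ ν, ∑ ρ, ginv (g x) μ ν * ginv (g x) lam ρ * Gamma1 (jetH g x).2.1 ρ μ ν)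
    (x : Fin 4 → ℝ) (μ ν α : Fin 4) :
    dL1H g x μ ν α - ∑ β, pd β (fun t => P4H g t μ ν α β) x
      = (1 / 2) * (-(ginv (g x) μ α * Γvec x ν) - ginv (g x) ν α * Γvec x μ
          + Γup x ν μ α + Γup x μ ν α) * Real.sqrt (-(metr (g x)).det) := by
  have hU : ∀ l m n, Γup x l m n = Uu g x l m n := fun l m n => hΓup x l m n
  have hV : ∀ l, Γvec x l = Vv g x l := fun l => hΓvec x l
  have hstep : (∑ β, pd β (fun t => P4H g t μ ν α β) x)
      = (1/2 * Real.sqrt (-(metr (g x)).det)) * (-(Uu g x μ α ν + Uu g x α μ ν))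
      + (1/2 * Real.sqrt (-(metr (g x)).det) * ginv (g x) μ α)
          * (-(Vv g x ν + 1/2 * ∑ r, ginv (g x) ν r * uu g x r))
      + (1/2 * Real.sqrt (-(metr (g x)).det) * ginv (g x) ν α)
          * (-(Vv g x μ + 1/2 * ∑ r, ginv (g x) μ r * uu g x r))
      + (1/2 * Real.sqrt (-(metr (g x)).det)) * (-(Uu g x ν α μ + Uu g x α ν μ))
      - (Real.sqrt (-(metr (g x)).det)) * (-(Uu g x μ ν α + Uu g x ν μ α))
      - (Real.sqrt (-(metr (g x)).det) * ginv (g x) μ ν)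
          * (-(Vv g x α + 1/2 * ∑ r, ginv (g x) α r * uu g x r))
      + (Real.sqrt (-(metr (g x)).det) / 4 * ginv (g x) μ α)
          * (∑ β, ginv (g x) ν β * uu g x β)
      + (Real.sqrt (-(metr (g x)).det) / 4 * ginv (g x) ν α)
          * (∑ β, ginv (g x) μ β * uu g x β)
      - (Real.sqrt (-(metr (g x)).det) / 2 * ginv (g x) μ ν)
          * (∑ β, ginv (g x) α β * uu g x β) := by
    have e1 : (∑ β, pd β (fun t => P4H g t μ ν α β) x) = ∑ β,
        ((1/2 * Real.sqrt (-(metr (g x)).det)) * (WW g x μ α β * ginv (g x) ν β)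
        + (1/2 * Real.sqrt (-(metr (g x)).det) * ginv (g x) μ α) * WW g x ν β β
        + (1/2 * Real.sqrt (-(metr (g x)).det) * ginv (g x) ν α) * WW g x μ β β
        + (1/2 * Real.sqrt (-(metr (g x)).det)) * (WW g x ν α β * ginv (g x) μ β)
        - (Real.sqrt (-(metr (g x)).det)) * (WW g x μ ν β * ginv (g x) α β)
        - (Real.sqrt (-(metr (g x)).det) * ginv (g x) μ ν) * WW g x α β β
        + (Real.sqrt (-(metr (g x)).det) / 4 * ginv (g x) μ α)
            * (ginv (g x) ν β * uu g x β)
        + (Real.sqrt (-(metr (g x)).det) / 4 * ginv (g x) ν α)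
            * (ginv (g x) μ β * uu g x β)
        - (Real.sqrt (-(metr (g x)).det) / 2 * ginv (g x) μ ν)
            * (ginv (g x) α β * uu g x β)) :=
      Finset.sum_congr rfl fun β _ => by
        rw [pd_P4H hsmooth hsym hdet x μ ν α β]; ring
    rw [e1]
    simp only [Finset.sum_add_distrib, Finset.sum_sub_distrib, ← Finset.mul_sum]
    rw [claimA hsym x μ α ν, claimA hsym x ν α μ, claimA hsym x μ ν α,
      claimB hsym x ν, claimB hsym x μ, claimB hsym x α]
  rw [hstep]
  rw [dL1H_eq hsmooth hdet x μ ν α, DD_eval hsym x μ ν α]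
  rw [Tf_closed hsym x ν μ α, Tf_closed hsym x μ ν α, Tf_closed hsym x ν α μ,
    Tf_closed hsym x μ α ν, Tf_closed hsym x α μ ν, Tf_closed hsym x α ν μ]
  simp only [hU, hV]
  rw [Uu_symm hsym x ν α μ, Uu_symm hsym x μ α ν, Uu_symm hsym x α ν μ,
    ginv_symm hsym x α μ, ginv_symm hsym x α ν, ginv_symm hsym x ν μ]
  ring
end
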